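/- arXiv:1407.7383 — 7 statements merged into one kernel-verified Lean document; each statement's English description precedes it below -/
import Mathlib

section
/- Let 1 < γ < 2, ρ0 > 0, q0 > 0 with q0² > γ ρ0^{γ−1} (supersonic entrance) and normalize ½q0² + (γ/(γ−1))ρ0^{γ−1} = 1. Then the system r²ρ̂(r)Û(r) = ρ0 q0, ½Û(r)² + (γ/(γ−1))ρ̂(r)^{γ−1} = 1, with ρ̂(1)=ρ0, Û(1)=q0, has a unique smooth solution (ρ̂, Û) for all r ≥ 1 with ρ̂(r) > 0 and Û(r)² > γ ρ̂(r)^{γ−1} for all r ≥ 1. -/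
open Set Filter

set_option maxHeartbeats 1000000 in
/-- global existence and uniqueness of the smooth supersonic background flow. -/
theorem background_flow_exists_unique (γ ρ0 q0 : ℝ)
    (hγ1 : 1 < γ) (hγ2 : γ < 2) (hρ0 : 0 < ρ0) (hq0 : 0 < q0)
    (hsup0 : γ * ρ0 ^ (γ - 1) < q0 ^ 2)
    (hnorm : q0 ^ 2 / 2 + (γ / (γ - 1)) * ρ0 ^ (γ - 1) = 1) :
    ∃ ρ U : ℝ → ℝ,
      (ContDiffOn ℝ (⊤ : ℕ∞) ρ (Set.Ici 1) ∧ ContDiffOn ℝ (⊤ : ℕ∞) U (Set.Ici 1) ∧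
        ρ 1 = ρ0 ∧ U 1 = q0 ∧
        (∀ r ≥ (1 : ℝ), r ^ 2 * ρ r * U r = ρ0 * q0) ∧
        (∀ r ≥ (1 : ℝ), U r ^ 2 / 2 + (γ / (γ - 1)) * ρ r ^ (γ - 1) = 1) ∧
        (∀ r ≥ (1 : ℝ), 0 < ρ r) ∧
        (∀ r ≥ (1 : ℝ), γ * ρ r ^ (γ - 1) < U r ^ 2)) ∧
      (∀ ρ' U' : ℝ → ℝ,
        ContDiffOn ℝ (⊤ : ℕ∞) ρ' (Set.Ici 1) → ContDiffOn ℝ (⊤ : ℕ∞) U' (Set.Ici 1) →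
        ρ' 1 = ρ0 → U' 1 = q0 →
        (∀ r ≥ (1 : ℝ), r ^ 2 * ρ' r * U' r = ρ0 * q0) →
        (∀ r ≥ (1 : ℝ), U' r ^ 2 / 2 + (γ / (γ - 1)) * ρ' r ^ (γ - 1) = 1) →
        (∀ r ≥ (1 : ℝ), 0 < ρ' r) →
        (∀ r ≥ (1 : ℝ), γ * ρ' r ^ (γ - 1) < U' r ^ 2) →
        ∀ r ≥ (1 : ℝ), ρ' r = ρ r ∧ U' r = U r) := by
  classical
  have hγ0 : (0:ℝ) < γ := by linarith
  have hp : (0:ℝ) < γ - 1 := by linarith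
  set p : ℝ := γ - 1 with hpdef
  set e : ℝ := (γ - 1)⁻¹ with hedef
  have hepos : 0 < e := by rw [hedef]; exact inv_pos.mpr hp
  have hpe : p * e = 1 := mul_inv_cancel₀ (ne_of_gt hp)
  have he1 : 1 ≤ e := by nlinarith [hpe]
  set K : ℝ → ℝ := fun u => (γ - 1) / γ * (1 - u ^ 2 / 2) with hKdef
  set F : ℝ → ℝ := fun u => u * K u ^ e with hFdef
  set crit : ℝ := 2 * (γ - 1) / (γ + 1) with hcritdef
  have hcritpos : 0 < crit := by rw [hcritdef]; positivity
  set sa : ℝ := Real.sqrt crit with hsadef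
  set sb : ℝ := Real.sqrt 2 with hsbdef
  have hsb2 : sb ^ 2 = 2 := Real.sq_sqrt (by norm_num)
  -- membership characterization
  have hmem : ∀ u : ℝ, u ∈ Ioo sa sb ↔ 0 < u ∧ crit < u ^ 2 ∧ u ^ 2 < 2 := by
    intro u
    constructor
    · rintro ⟨h1, h2⟩
      have hsa : 0 < sa := Real.sqrt_pos.mpr hcritpos
      have hu : 0 < u := hsa.trans h1
      refine ⟨hu, ?_, ?_⟩
      · have : sa ^ 2 < u ^ 2 := by
          apply pow_lt_pow_left₀ h1 hsa.le
          norm_num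
        rwa [hsadef, Real.sq_sqrt hcritpos.le] at this
      · have : u ^ 2 < sb ^ 2 := by
          apply pow_lt_pow_left₀ h2 hu.le
          norm_num
        rwa [hsb2] at this
    · rintro ⟨h0, h1, h2⟩
      exact ⟨(Real.sqrt_lt' h0).mpr h1, (Real.lt_sqrt h0.le).mpr h2⟩
  -- K positivity
  have hKpos : ∀ u : ℝ, u ^ 2 < 2 → 0 < K u := by
    intro u h
    rw [hKdef]
    have : 0 < (γ-1)/γ := div_pos hp hγ0
    nlinarith
  -- γ * K u formula
  have hγK : ∀ u : ℝ, γ * K u = (γ - 1) * (1 - u ^ 2 / 2) := by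
    intro u
    rw [hKdef]
    field_simp
  -- K q0 = ρ0 ^ p
  have hρ0p : 0 < ρ0 ^ p := Real.rpow_pos_of_pos hρ0 p
  have hB : γ / (γ - 1) * ρ0 ^ p = 1 - q0 ^ 2 / 2 := by rw [hpdef]; linarith
  have hKq0 : K q0 = ρ0 ^ p := by
    rw [hKdef]
    have h := hB
    field_simp at h ⊢
    rw [div_eq_iff (ne_of_gt (by linarith : (0:ℝ) < γ - 1))] at h
    linarith
  -- q0 ∈ Ioo sa sb
  have hq02 : q0 ^ 2 < 2 := by
    have h1 : 0 < γ / (γ - 1) * ρ0 ^ p := mul_pos (div_pos hγ0 hp) hρ0p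
    nlinarith [hB]
  have hq0crit : crit < q0 ^ 2 := by
    have h1 : γ * K q0 < q0 ^ 2 := by rw [hKq0]; rw [hpdef] at *; exact hsup0
    rw [hγK] at h1
    rw [hcritdef, div_lt_iff₀ (by linarith : (0:ℝ) < γ + 1)]
    nlinarith
  have hq0mem : q0 ∈ Ioo sa sb := (hmem q0).mpr ⟨hq0, hq0crit, hq02⟩
  -- derivative of K
  have hKder : ∀ u : ℝ, HasDerivAt K (-((γ - 1) / γ) * u) u := by
    intro u
    have h1 : HasDerivAt (fun u : ℝ => (γ-1)/γ * (1 - u ^ 2 / 2))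
        ((γ-1)/γ * -(((2:ℕ) * u ^ (2-1)) / 2)) u :=
      (((hasDerivAt_pow 2 u).div_const 2).const_sub 1).const_mul _
    rw [hKdef]
    convert h1 using 1
    push_cast
    ring
  -- derivative of F
  have hFder : ∀ u : ℝ, HasDerivAt F
      (1 * K u ^ e + u * (e * K u ^ (e - 1) * (-((γ - 1) / γ) * u))) u := by
    intro u
    have h1 : HasDerivAt (fun u : ℝ => K u ^ e) (e * K u ^ (e - 1) * (-((γ - 1) / γ) * u)) u := by
      have h2 := Real.hasDerivAt_rpow_const (x := K u) (p := e) (Or.inr he1)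
      simpa [Function.comp_def] using h2.comp u (hKder u)
    rw [hFdef]
    simpa using (hasDerivAt_id' u).fun_mul h1
  have hFdiff : Differentiable ℝ F := fun u => (hFder u).differentiableAt
  have hFcont : Continuous F := hFdiff.continuous
  -- derivative formula on positivity region
  have hFder' : ∀ u : ℝ, 0 < K u →
      HasDerivAt F (K u ^ (e - 1) * (K u - (γ - 1) / γ * e * u ^ 2)) u := by
    intro u hKu
    have h0 := hFder u
    have he2 : K u ^ e = K u ^ (e - 1) * K u := by
      have := Real.rpow_add_one hKu.ne' (e - 1)
      rw [sub_add_cancel] at this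
      exact this
    convert h0 using 1
    rw [he2]
    ring
  -- negativity of second factor on supersonic region
  have hfac : ∀ u : ℝ, crit < u ^ 2 → u ^ 2 < 2 → K u - (γ - 1) / γ * e * u ^ 2 < 0 := by
    intro u h1 h2
    have hc : 2 * (γ - 1) < u ^ 2 * (γ + 1) := by
      rw [hcritdef, div_lt_iff₀ (by linarith : (0:ℝ) < γ + 1)] at h1
      linarith
    have h3 : γ * (K u - (γ - 1) / γ * e * u ^ 2) = (γ - 1) * (1 - u ^ 2 / 2) - u ^ 2 := by
      rw [hKdef, hedef]
      have hne1 : γ - 1 ≠ 0 := (by linarith : (0:ℝ) < γ - 1).ne'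
      field_simp
    have h4 : (γ - 1) * (1 - u ^ 2 / 2) - u ^ 2 < 0 := by nlinarith
    nlinarith [h3, h4]
  -- strict antitonicity
  have hanti : StrictAntiOn F (Ioo sa sb) := by
    apply strictAntiOn_of_deriv_neg (convex_Ioo _ _) hFcont.continuousOn
    intro x hx
    rw [interior_Ioo] at hx
    obtain ⟨hx0, hx1, hx2⟩ := (hmem x).mp hx
    have hKx := hKpos x hx2
    rw [(hFder' x hKx).deriv]
    exact mul_neg_of_pos_of_neg (Real.rpow_pos_of_pos hKx _) (hfac x hx1 hx2)
  -- endpoint values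
  have hFq0 : F q0 = ρ0 * q0 := by
    rw [hFdef]
    show q0 * K q0 ^ e = ρ0 * q0
    rw [hKq0, ← Real.rpow_mul hρ0.le, hpe, Real.rpow_one]
    ring
  have hFsb : F sb = 0 := by
    rw [hFdef]
    show sb * K sb ^ e = 0
    have : K sb = 0 := by rw [hKdef]; simp [hsb2]
    rw [this, Real.zero_rpow hepos.ne']
    ring
  have hmpos : 0 < ρ0 * q0 := mul_pos hρ0 hq0
  -- existence of U r
  have exU : ∀ r : ℝ, 1 ≤ r → ∃ u, u ∈ Ioo sa sb ∧ F u = ρ0 * q0 / r ^ 2 := by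
    intro r hr
    have hr0 : (0:ℝ) < r := lt_of_lt_of_le one_pos hr
    have hr2 : (0:ℝ) < r ^ 2 := by positivity
    have ht1 : 0 < ρ0 * q0 / r ^ 2 := by positivity
    have h1r2 : (1:ℝ) ≤ r ^ 2 := by nlinarith
    have ht2 : ρ0 * q0 / r ^ 2 ≤ ρ0 * q0 := by
      rw [div_le_iff₀ hr2]
      nlinarith
    have hsub : Icc (F sb) (F q0) ⊆ F '' Icc q0 sb :=
      intermediate_value_Icc' hq0mem.2.le hFcont.continuousOn
    have hmem' : ρ0 * q0 / r ^ 2 ∈ Icc (F sb) (F q0) :=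
      ⟨by rw [hFsb]; exact ht1.le, by rw [hFq0]; exact ht2⟩
    obtain ⟨u, hu, hFu⟩ := hsub hmem'
    refine ⟨u, ?_, hFu⟩
    have hne : u ≠ sb := by
      rintro rfl
      rw [hFsb] at hFu
      exact ht1.ne hFu
    exact ⟨lt_of_lt_of_le hq0mem.1 hu.1, lt_of_le_of_ne hu.2 hne⟩
  set U : ℝ → ℝ := fun r => if hr : 1 ≤ r then (exU r hr).choose else q0 with hUdef
  have hU : ∀ r : ℝ, 1 ≤ r → U r ∈ Ioo sa sb ∧ F (U r) = ρ0 * q0 / r ^ 2 := by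
    intro r hr
    rw [hUdef]
    simp only [dif_pos hr]
    exact (exU r hr).choose_spec
  set ρ : ℝ → ℝ := fun r => K (U r) ^ e with hρdef
  -- initial values
  have hU1 : U 1 = q0 := by
    have h := hU 1 le_rfl
    apply hanti.injOn h.1 hq0mem
    rw [h.2, hFq0]
    norm_num
  have hρ1 : ρ 1 = ρ0 := by
    rw [hρdef]
    show K (U 1) ^ e = ρ0
    rw [hU1, hKq0, ← Real.rpow_mul hρ0.le, hpe, Real.rpow_one]
  -- pointwise facts
  have hKU : ∀ r : ℝ, 1 ≤ r → 0 < K (U r) := by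
    intro r hr
    exact hKpos _ ((hmem _).mp (hU r hr).1).2.2
  have hρpos : ∀ r ≥ (1:ℝ), 0 < ρ r := by
    intro r hr
    exact Real.rpow_pos_of_pos (hKU r hr) e
  have hρp : ∀ r : ℝ, 1 ≤ r → ρ r ^ p = K (U r) := by
    intro r hr
    rw [hρdef]
    show (K (U r) ^ e) ^ p = K (U r)
    rw [← Real.rpow_mul (hKU r hr).le, mul_comm, hpe, Real.rpow_one]
  have hbern : ∀ r ≥ (1:ℝ), U r ^ 2 / 2 + γ / (γ - 1) * ρ r ^ (γ - 1) = 1 := by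
    intro r hr
    rw [← hpdef, hρp r hr, hKdef]
    show U r ^ 2 / 2 + γ / (γ - 1) * ((γ - 1) / γ * (1 - U r ^ 2 / 2)) = 1
    have hne1 : γ - 1 ≠ 0 := (by linarith : (0:ℝ) < γ - 1).ne'
    field_simp
    ring
  have hmass : ∀ r ≥ (1:ℝ), r ^ 2 * ρ r * U r = ρ0 * q0 := by
    intro r hr
    have hr0 : (0:ℝ) < r := lt_of_lt_of_le one_pos hr
    have hr2 : (0:ℝ) < r ^ 2 := by positivity
    have h := (hU r hr).2
    rw [hFdef] at h
    have h2 : U r * K (U r) ^ e = ρ0 * q0 / r ^ 2 := h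
    rw [hρdef]
    show r ^ 2 * K (U r) ^ e * U r = ρ0 * q0
    rw [eq_div_iff hr2.ne'] at h2
    linear_combination h2
  have hsup : ∀ r ≥ (1:ℝ), γ * ρ r ^ (γ - 1) < U r ^ 2 := by
    intro r hr
    rw [← hpdef, hρp r hr]
    obtain ⟨h0, h1, h2⟩ := (hmem _).mp (hU r hr).1
    have h3 := hγK (U r)
    have hc : 2 * (γ - 1) < U r ^ 2 * (γ + 1) := by
      rw [hcritdef, div_lt_iff₀ (by linarith : (0:ℝ) < γ + 1)] at h1
      linarith
    nlinarith
  -- smoothness of K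
  have hKcd : ContDiff ℝ (⊤ : ℕ∞) K := by
    rw [hKdef]
    exact contDiff_const.mul (contDiff_const.sub ((contDiff_id.pow 2).div_const 2))
  -- smoothness of U
  have hUsmooth : ContDiffOn ℝ (⊤ : ℕ∞) U (Ici 1) := by
    intro r hr
    rw [mem_Ici] at hr
    have hr0 : (0:ℝ) < r := lt_of_lt_of_le one_pos hr
    obtain ⟨humem, hFu⟩ := hU r hr
    have hKu := hKU r hr
    obtain ⟨h0, h1, h2⟩ := (hmem _).mp humem
    -- F is ContDiffAt at U r
    have hFca : ContDiffAt ℝ (⊤ : ℕ∞) F (U r) := by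
      have h3 : ContDiffAt ℝ (⊤ : ℕ∞) (fun x : ℝ => K x ^ e) (U r) := by
        have h4 : ContDiffAt ℝ (⊤ : ℕ∞) (fun x : ℝ => x ^ e) (K (U r)) :=
          Real.contDiffAt_rpow_const_of_ne hKu.ne'
        simpa [Function.comp_def] using h4.comp (U r) hKcd.contDiffAt
      rw [hFdef]
      exact contDiffAt_id.mul h3
    have hne : K (U r) ^ (e - 1) * (K (U r) - (γ - 1) / γ * e * U r ^ 2) ≠ 0 :=
      (mul_neg_of_pos_of_neg (Real.rpow_pos_of_pos hKu _) (hfac _ h1 h2)).ne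
    have hfd := (hFder' (U r) hKu).hasFDerivAt_equiv hne
    set g : ℝ → ℝ := hFca.localInverse hfd (by simp) with hgdef
    have cdg : ContDiffAt ℝ (⊤ : ℕ∞) g (F (U r)) := hFca.to_localInverse hfd (by simp)
    have hgF : g (F (U r)) = U r := hFca.localInverse_apply_image hfd (by simp)
    have hEvR : ∀ᶠ y in nhds (F (U r)), F (g y) = y :=
      (hFca.hasStrictFDerivAt' hfd (by simp)).eventually_right_inverse
    -- φ : r ↦ m / r²
    have hφ : ContDiffAt ℝ (⊤ : ℕ∞) (fun r' : ℝ => ρ0 * q0 / r' ^ 2) r :=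
      contDiffAt_const.div (contDiffAt_id.pow 2) (by positivity)
    have hφr : ρ0 * q0 / r ^ 2 = F (U r) := hFu.symm
    set G : ℝ → ℝ := fun r' => g (ρ0 * q0 / r' ^ 2) with hGdef
    have cdG : ContDiffAt ℝ (⊤ : ℕ∞) G r := by
      have cdg' := cdg
      rw [← hφr] at cdg'
      have h5 := cdg'.comp r hφ
      simpa [Function.comp_def, hGdef] using h5
    have htend : Tendsto (fun r' : ℝ => ρ0 * q0 / r' ^ 2) (nhds r) (nhds (F (U r))) := by
      rw [← hφr]
      exact hφ.continuousAt
    have hev1 : ∀ᶠ r' in nhds r, F (G r') = ρ0 * q0 / r' ^ 2 := htend.eventually hEvR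
    have hGr : G r = U r := by rw [hGdef]; show g (ρ0 * q0 / r ^ 2) = U r; rw [hφr, hgF]
    have hev2 : ∀ᶠ r' in nhds r, G r' ∈ Ioo sa sb := by
      apply cdG.continuousAt.eventually_mem
      rw [hGr]
      exact isOpen_Ioo.mem_nhds humem
    have hevEq : U =ᶠ[nhdsWithin r (Ici 1)] G := by
      filter_upwards [hev1.filter_mono nhdsWithin_le_nhds, hev2.filter_mono nhdsWithin_le_nhds,
        self_mem_nhdsWithin] with r' h1' h2' hr'
      rw [mem_Ici] at hr'
      exact hanti.injOn (hU r' hr').1 h2' (by rw [(hU r' hr').2, h1'])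
    exact (cdG.contDiffWithinAt).congr_of_eventuallyEq hevEq hGr.symm
  -- smoothness of ρ
  have hρsmooth : ContDiffOn ℝ (⊤ : ℕ∞) ρ (Ici 1) := by
    intro r hr
    rw [mem_Ici] at hr
    have hKu := hKU r hr
    have h4 : ContDiffAt ℝ (⊤ : ℕ∞) (fun x : ℝ => x ^ e) (K (U r)) :=
      Real.contDiffAt_rpow_const_of_ne hKu.ne'
    have h5 := h4.comp_contDiffWithinAt r
      ((hKcd.contDiffAt).comp_contDiffWithinAt r (hUsmooth r (mem_Ici.mpr hr)))
    rw [hρdef]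
    simpa [Function.comp_def] using h5
  refine ⟨ρ, U, ⟨hρsmooth, hUsmooth, hρ1, hU1, hmass, hbern, hρpos, hsup⟩, ?_⟩
  -- uniqueness
  intro ρ' U' _ _ _ _ hm' hb' hpos' hsup' r hr
  have hr0 : (0:ℝ) < r := lt_of_lt_of_le one_pos hr
  have hr2 : (0:ℝ) < r ^ 2 := by positivity
  have hmass' := hm' r hr
  have hρ'pos := hpos' r hr
  have hU'pos : 0 < U' r := by nlinarith [mul_pos hr2 hρ'pos, hmpos]
  have hbr := hb' r hr
  have hρ'ppos : 0 < ρ' r ^ p := Real.rpow_pos_of_pos hρ'pos p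
  have hU'2 : U' r ^ 2 < 2 := by
    have h1 : 0 < γ / (γ - 1) * ρ' r ^ p := mul_pos (div_pos hγ0 hp) hρ'ppos
    nlinarith
  have hρ'p : ρ' r ^ p = K (U' r) := by
    rw [hKdef]
    show ρ' r ^ p = (γ - 1) / γ * (1 - U' r ^ 2 / 2)
    field_simp [hp.ne', hγ0.ne'] at hbr ⊢
    nlinarith [hbr]
  have hsupr := hsup' r hr
  rw [hρ'p] at hsupr
  have hU'crit : crit < U' r ^ 2 := by
    have h3 := hγK (U' r)
    rw [hcritdef, div_lt_iff₀ (by linarith : (0:ℝ) < γ + 1)]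
    nlinarith
  have hu'mem : U' r ∈ Ioo sa sb := (hmem _).mpr ⟨hU'pos, hU'crit, hU'2⟩
  have hFU' : F (U' r) = ρ0 * q0 / r ^ 2 := by
    rw [hFdef]
    show U' r * K (U' r) ^ e = ρ0 * q0 / r ^ 2
    rw [← hρ'p, ← Real.rpow_mul hρ'pos.le, hpe, Real.rpow_one]
    rw [eq_div_iff hr2.ne']
    linarith [hmass']
  have hUeq : U' r = U r := hanti.injOn hu'mem (hU r hr).1 (by rw [hFU', (hU r hr).2])
  refine ⟨?_, hUeq⟩
  have h1 : ρ' r = (ρ' r ^ p) ^ e := by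
    rw [← Real.rpow_mul hρ'pos.le, hpe, Real.rpow_one]
  rw [h1, hρ'p, hUeq, hρdef]
end

section
/- Under the assumptions of the background flow problem (r²ρ̂Û = ρ0q0, ½Û² + (γ/(γ−1))ρ̂^{γ−1} = 1, 1 < γ < 2, supersonic at r = 1), the solution satisfies the differential identities ρ̂'(r) = −2ρ0 q0 Û / (r³(Û² − c²(ρ̂))) and Û'(r) = 2Û c²(ρ̂) / (r(Û² − c²(ρ̂))), where c²(ρ) = γρ^{γ−1}. In particular ρ̂'(r) < 0 and Û'(r) > 0 for all r ≥ 1. -/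
set_option maxHeartbeats 1600000
open Set


lemma aux_mono (γ : ℝ) (hγ1 : 1 < γ) (x y : ℝ) (hx : 0 < x) (hxy : x < y)
    (hy : y ^ (γ-1) ≤ 2*(γ-1)/(γ*(γ+1))) :
    x^2 * (2 - (2*γ/(γ-1)) * x^(γ-1)) < y^2 * (2 - (2*γ/(γ-1)) * y^(γ-1)) := by
  have hγ0 : (0:ℝ) < γ := by linarith
  have hγ1' : (0:ℝ) < γ - 1 := by linarith
  set B : ℝ := 2*γ/(γ-1) with hB
  have key : StrictMonoOn (fun t : ℝ => t^2*(2 - B*t^(γ-1))) (Icc x y) := by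
    apply strictMonoOn_of_deriv_pos (convex_Icc x y)
    · apply ContinuousOn.mul (by fun_prop)
      apply ContinuousOn.sub continuousOn_const
      apply ContinuousOn.mul continuousOn_const
      exact ContinuousOn.rpow_const continuousOn_id
        (fun t ht => Or.inl (ne_of_gt (lt_of_lt_of_le hx ht.1)))
    · intro z hz
      rw [interior_Icc] at hz
      have hz0 : 0 < z := hx.trans hz.1
      have hd : HasDerivAt (fun t : ℝ => t^2*(2 - B*t^(γ-1)))
          ((2:ℕ)*z^(2-1) * (2 - B*z^(γ-1)) + z^2 * (-(B*((γ-1)*z^(γ-1-1))))) z := by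
        exact (hasDerivAt_pow 2 z).mul
          (((Real.hasDerivAt_rpow_const (Or.inl hz0.ne')).const_mul B).const_sub 2)
      rw [hd.deriv]
      have hzz : z^(γ-1-1) = z^(γ-1)/z := by
        rw [show γ-1-1 = (γ-1) - 1 by ring, Real.rpow_sub hz0, Real.rpow_one]
      rw [hzz]
      set w : ℝ := z^(γ-1) with hw
      have hw0 : 0 < w := Real.rpow_pos_of_pos hz0 _
      have hwA : w < 2*(γ-1)/(γ*(γ+1)) := by
        refine lt_of_lt_of_le ?_ hy
        exact Real.rpow_lt_rpow hz0.le hz.2 hγ1'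
      have hwA' : γ*(γ+1)*w < 2*(γ-1) := by
        rw [lt_div_iff₀ (by positivity)] at hwA; linarith [hwA]
      have hexpr : (2:ℕ)*z^(2-1)*(2 - B*w) + z^2*(-(B*((γ-1)*(w/z))))
          = (2*z/(γ-1))*(2*(γ-1) - γ*(γ+1)*w) := by
        have hne : γ - 1 ≠ 0 := ne_of_gt hγ1'
        rw [hB]
        field_simp
        ring
      rw [hexpr]
      apply mul_pos (by positivity) (by linarith)
  exact key ⟨le_refl x, hxy.le⟩ ⟨hxy.le, le_refl y⟩ hxy

lemma aux_supersonic (γ ρ0 q0 : ℝ) (ρ U : ℝ → ℝ)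
    (hγ1 : 1 < γ) (hρ0 : 0 < ρ0) (hq0 : 0 < q0)
    (hsup0 : γ * ρ0 ^ (γ - 1) < q0 ^ 2)
    (hρs : ContDiffOn ℝ (⊤ : ℕ∞) ρ (Set.Ici 1)) (hUs : ContDiffOn ℝ (⊤ : ℕ∞) U (Set.Ici 1))
    (hρpos : ∀ r ≥ (1 : ℝ), 0 < ρ r) (hUpos : ∀ r ≥ (1 : ℝ), 0 < U r)
    (hmass : ∀ r ≥ (1 : ℝ), r ^ 2 * ρ r * U r = ρ0 * q0)
    (hbern : ∀ r ≥ (1 : ℝ), U r ^ 2 / 2 + (γ / (γ - 1)) * ρ r ^ (γ - 1) = 1)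
    (hρ1 : ρ 1 = ρ0) (hU1 : U 1 = q0) :
    ∀ r ≥ (1 : ℝ), γ * ρ r ^ (γ - 1) < U r ^ 2 := by
  have hγ1' : (0:ℝ) < γ - 1 := by linarith
  have hγ0 : (0:ℝ) < γ := by linarith
  by_contra hcon
  push_neg at hcon
  obtain ⟨r0, hr0, hle⟩ := hcon
  set S : ℝ → ℝ := fun r => U r ^ 2 - γ * ρ r ^ (γ - 1) with hS
  have hScont : ContinuousOn S (Icc 1 r0) := by
    apply ContinuousOn.sub
    · exact ((hUs.continuousOn.mono Icc_subset_Ici_self).pow 2)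
    · apply ContinuousOn.mul continuousOn_const
      exact ContinuousOn.rpow_const (hρs.continuousOn.mono Icc_subset_Ici_self)
        (fun t ht => Or.inl (ne_of_gt (hρpos t ht.1)))
  have hS1 : 0 < S 1 := by
    simp only [hS, hρ1, hU1]
    linarith
  have hSr0 : S r0 ≤ 0 := by simp only [hS]; linarith
  obtain ⟨x, hxmem, hSx⟩ := intermediate_value_Icc' hr0 hScont ⟨hSr0, hS1.le⟩
  have hx1 : (1:ℝ) ≤ x := hxmem.1
  have hρx : 0 < ρ x := hρpos x hx1
  have hUx : 0 < U x := hUpos x hx1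
  -- sonic relation
  have hsonic : U x ^ 2 = γ * ρ x ^ (γ - 1) := by
    have : U x ^ 2 - γ * ρ x ^ (γ-1) = 0 := hSx
    linarith
  have hbx := hbern x hx1
  have hb1 := hbern 1 (le_refl 1)
  rw [hρ1, hU1] at hb1
  -- Bernoulli at 1 gives q0^2 = 2 - (2γ/(γ-1)) ρ0^(γ-1)
  have hq0sq : q0 ^ 2 = 2 - (2*γ/(γ-1)) * ρ0 ^ (γ-1) := by
    field_simp at hb1 ⊢
    linarith
  -- a0 < A
  have hA : (0:ℝ) < 2*(γ-1)/(γ*(γ+1)) := by positivity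
  have ha0A : ρ0 ^ (γ-1) < 2*(γ-1)/(γ*(γ+1)) := by
    rw [lt_div_iff₀ (by positivity)]
    have hb1' : q0^2*(γ-1) + 2*γ*ρ0^(γ-1) = 2*(γ-1) := by
      field_simp at hb1
      linarith
    nlinarith [mul_lt_mul_of_pos_right hsup0 hγ1', hb1']
  -- at x: ρ x ^(γ-1) = A
  have haxA : ρ x ^ (γ-1) = 2*(γ-1)/(γ*(γ+1)) := by
    rw [eq_div_iff (by positivity)]
    rw [hsonic] at hbx
    field_simp at hbx
    linarith
  -- ρ0 < ρ x
  have hρ0x : ρ0 < ρ x := by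
    by_contra h
    push_neg at h
    have := Real.rpow_le_rpow hρx.le h hγ1'.le
    rw [haxA] at this
    linarith
  have hmono := aux_mono γ hγ1 ρ0 (ρ x) hρ0 hρ0x (le_of_eq haxA)
  -- rewrite: LHS = ρ0^2 q0^2, RHS = ρ x^2 U x^2
  have hR : 2 - (2*γ/(γ-1)) * ρ x ^ (γ-1) = U x ^ 2 := by
    rw [haxA, hsonic, haxA]
    field_simp
    ring
  rw [← hq0sq, hR] at hmono
  -- mass at x
  have hmx := hmass x hx1
  have hx2 : (1:ℝ) ≤ x^2 := by nlinarith
  have h1x : ρ x * U x ≤ ρ0 * q0 := by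
    nlinarith [mul_pos hρx hUx, hx2, hmx]
  have h2 : (ρ x * U x)^2 ≤ (ρ0*q0)^2 := pow_le_pow_left₀ (mul_pos hρx hUx).le h1x 2
  have h3 : ρ x^2 * U x^2 ≤ ρ0^2*q0^2 := by
    calc ρ x^2 * U x^2 = (ρ x * U x)^2 := by ring
    _ ≤ (ρ0*q0)^2 := h2
    _ = ρ0^2*q0^2 := by ring
  linarith


/-- differential identities for the background flow:
ρ̂' = −2ρ₀q₀Û/(r³(Û²−c²(ρ̂))) and Û' = 2Ûc²(ρ̂)/(r(Û²−c²(ρ̂))), where c²(ρ) = γρ^(γ−1);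
in particular ρ̂' < 0 and Û' > 0 on [1,∞). -/
theorem background_flow_derivatives (γ ρ0 q0 : ℝ) (ρ U : ℝ → ℝ)
    (hγ1 : 1 < γ) (hγ2 : γ < 2) (hρ0 : 0 < ρ0) (hq0 : 0 < q0)
    (hsup0 : γ * ρ0 ^ (γ - 1) < q0 ^ 2)
    (hρs : ContDiffOn ℝ (⊤ : ℕ∞) ρ (Set.Ici 1)) (hUs : ContDiffOn ℝ (⊤ : ℕ∞) U (Set.Ici 1))
    (hρpos : ∀ r ≥ (1 : ℝ), 0 < ρ r) (hUpos : ∀ r ≥ (1 : ℝ), 0 < U r)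
    (hmass : ∀ r ≥ (1 : ℝ), r ^ 2 * ρ r * U r = ρ0 * q0)
    (hbern : ∀ r ≥ (1 : ℝ), U r ^ 2 / 2 + (γ / (γ - 1)) * ρ r ^ (γ - 1) = 1)
    (hρ1 : ρ 1 = ρ0) (hU1 : U 1 = q0) :
    ∀ r ≥ (1 : ℝ),
      derivWithin ρ (Set.Ici 1) r =
        -(2 * ρ0 * q0 * U r) / (r ^ 3 * (U r ^ 2 - γ * ρ r ^ (γ - 1))) ∧
      derivWithin U (Set.Ici 1) r =
        2 * U r * (γ * ρ r ^ (γ - 1)) / (r * (U r ^ 2 - γ * ρ r ^ (γ - 1))) ∧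
      derivWithin ρ (Set.Ici 1) r < 0 ∧
      0 < derivWithin U (Set.Ici 1) r := by
  have hγ1' : (0:ℝ) < γ - 1 := by linarith
  have hsup : ∀ r ≥ (1 : ℝ), γ * ρ r ^ (γ - 1) < U r ^ 2 :=
    aux_supersonic γ ρ0 q0 ρ U hγ1 hρ0 hq0 hsup0 hρs hUs hρpos hUpos hmass hbern hρ1 hU1
  intro r hr
  have hr0 : (0:ℝ) < r := lt_of_lt_of_le one_pos hr
  have hρr : 0 < ρ r := hρpos r hr
  have hUr : 0 < U r := hUpos r hr
  have hu : UniqueDiffWithinAt ℝ (Ici (1:ℝ)) r := uniqueDiffOn_Ici 1 r hr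
  set p' := derivWithin ρ (Set.Ici 1) r with hp'def
  set u' := derivWithin U (Set.Ici 1) r with hu'def
  have hρd : HasDerivWithinAt ρ p' (Ici 1) r :=
    (hρs.differentiableOn (by simp) r hr).hasDerivWithinAt
  have hUd : HasDerivWithinAt U u' (Ici 1) r :=
    (hUs.differentiableOn (by simp) r hr).hasDerivWithinAt
  -- mass equation derivative
  have hFd : HasDerivWithinAt (fun t => t ^ 2 * ρ t * U t)
      (((2:ℕ) * r ^ (2-1) * ρ r + r ^ 2 * p') * U r + r ^ 2 * ρ r * u') (Ici 1) r :=
    (((hasDerivAt_pow 2 r).hasDerivWithinAt.mul hρd).mul hUd)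
  have hF0 : HasDerivWithinAt (fun t : ℝ => t ^ 2 * ρ t * U t) 0 (Ici 1) r :=
    (hasDerivWithinAt_const r (Ici 1) (ρ0 * q0)).congr (fun t ht => hmass t ht) (hmass r hr)
  have eq1 : ((2:ℕ) * r ^ (2-1) * ρ r + r ^ 2 * p') * U r + r ^ 2 * ρ r * u' = 0 := by
    rw [← hFd.derivWithin hu, hF0.derivWithin hu]
  -- Bernoulli equation derivative
  have hGd : HasDerivWithinAt (fun t => U t ^ 2 / 2 + (γ / (γ - 1)) * ρ t ^ (γ - 1))
      (((2:ℕ) * U r ^ (2-1) * u') / 2 + (γ / (γ - 1)) * (p' * (γ - 1) * ρ r ^ (γ - 1 - 1)))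
      (Ici 1) r :=
    ((hUd.pow 2).div_const 2).add ((hρd.rpow_const (Or.inl hρr.ne')).const_mul (γ / (γ - 1)))
  have hG0 : HasDerivWithinAt (fun t => U t ^ 2 / 2 + (γ / (γ - 1)) * ρ t ^ (γ - 1)) 0 (Ici 1) r :=
    (hasDerivWithinAt_const r (Ici 1) 1).congr (fun t ht => hbern t ht) (hbern r hr)
  have eq2 : ((2:ℕ) * U r ^ (2-1) * u') / 2 + (γ / (γ - 1)) * (p' * (γ - 1) * ρ r ^ (γ - 1 - 1)) = 0 := by
    rw [← hGd.derivWithin hu, hG0.derivWithin hu]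
  -- simplify
  have hrpow : ρ r ^ (γ - 1 - 1) = ρ r ^ (γ - 1) / ρ r := by
    rw [show γ - 1 - 1 = (γ - 1) - 1 by ring, Real.rpow_sub hρr, Real.rpow_one]
  rw [hrpow] at eq2
  set a := ρ r ^ (γ - 1) with hadef
  have ha : 0 < a := Real.rpow_pos_of_pos hρr _
  have hS : 0 < U r ^ 2 - γ * a := by have := hsup r hr; linarith
  have eq2' : ρ r * U r * u' + γ * a * p' = 0 := by
    field_simp at eq2
    have h2 : (2*(γ-1)) * (ρ r * U r * u' + γ * a * p') = 0 := by linear_combination (γ - 1) * eq2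
    have h2' : (2*(γ-1)) ≠ 0 := by positivity
    exact (mul_eq_zero.1 h2).resolve_left h2'
  have eq1' : 2 * r * ρ r * U r + r ^ 2 * p' * U r + r ^ 2 * ρ r * u' = 0 := by
    push_cast at eq1
    linear_combination eq1
  have hm := hmass r hr
  -- key identity for p'
  have hp'2 : 2 * r * ρ r * U r ^ 2 + r ^ 2 * p' * (U r ^ 2 - γ * a) = 0 := by
    linear_combination U r * eq1' - r ^ 2 * eq2'
  have hrS : r ^ 3 * (U r ^ 2 - γ * a) ≠ 0 := by positivity
  have hrS1 : r * (U r ^ 2 - γ * a) ≠ 0 := by positivity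
  have goal1 : p' = -(2 * ρ0 * q0 * U r) / (r ^ 3 * (U r ^ 2 - γ * a)) := by
    rw [eq_div_iff hrS]
    linear_combination r * hp'2 - 2 * U r * hm
  have goal2 : u' = 2 * U r * (γ * a) / (r * (U r ^ 2 - γ * a)) := by
    rw [eq_div_iff hrS1]
    refine mul_right_cancel₀ (show ρ r * U r * r ≠ 0 by positivity) ?_
    linear_combination (r ^ 2 * (U r ^ 2 - γ * a)) * eq2' - (γ * a) * hp'2
  refine ⟨goal1, goal2, ?_, ?_⟩
  · rw [goal1]
    apply div_neg_of_neg_of_pos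
    · nlinarith [mul_pos (mul_pos hρ0 hq0) hUr]
    · positivity
  · rw [goal2]
    positivity
end

section
/- Under the assumptions of the background flow problem, the quantity Û(r)² − c²(ρ̂(r)) is nondecreasing in r, and hence Û(r)² − c²(ρ̂(r)) ≥ q0² − c²(ρ0) > 0 and Û(r) ≥ q0 for all r ≥ 1. -/
set_option maxHeartbeats 1600000 in
/-- Û² − c²(ρ̂) is nondecreasing, hence Û² − c²(ρ̂) ≥ q₀² − c²(ρ₀) > 0 and
Û ≥ q₀ on [1,∞). -/
theorem background_flow_supersonic_monotone (γ ρ0 q0 : ℝ) (ρ U : ℝ → ℝ)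
    (hγ1 : 1 < γ) (hγ2 : γ < 2) (hρ0 : 0 < ρ0) (hq0 : 0 < q0)
    (hsup0 : γ * ρ0 ^ (γ - 1) < q0 ^ 2)
    (hρs : ContDiffOn ℝ (⊤ : ℕ∞) ρ (Set.Ici 1)) (hUs : ContDiffOn ℝ (⊤ : ℕ∞) U (Set.Ici 1))
    (hρpos : ∀ r ≥ (1 : ℝ), 0 < ρ r) (hUpos : ∀ r ≥ (1 : ℝ), 0 < U r)
    (hmass : ∀ r ≥ (1 : ℝ), r ^ 2 * ρ r * U r = ρ0 * q0)
    (hbern : ∀ r ≥ (1 : ℝ), U r ^ 2 / 2 + (γ / (γ - 1)) * ρ r ^ (γ - 1) = 1)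
    (hρ1 : ρ 1 = ρ0) (hU1 : U 1 = q0) :
    (∀ r s : ℝ, 1 ≤ r → r ≤ s →
      U r ^ 2 - γ * ρ r ^ (γ - 1) ≤ U s ^ 2 - γ * ρ s ^ (γ - 1)) ∧
    (∀ r ≥ (1 : ℝ), q0 ^ 2 - γ * ρ0 ^ (γ - 1) ≤ U r ^ 2 - γ * ρ r ^ (γ - 1)) ∧
    0 < q0 ^ 2 - γ * ρ0 ^ (γ - 1) ∧
    (∀ r ≥ (1 : ℝ), q0 ≤ U r) := by
  have hγ' : (0:ℝ) < γ - 1 := by linarith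
  have hγpos : (0:ℝ) < γ := by linarith
  obtain ⟨K, hKdef⟩ : ∃ K : ℝ, K = 2*γ/(γ-1) := ⟨_, rfl⟩
  obtain ⟨A, hAdef⟩ : ∃ A : ℝ, A = γ*(γ+1)/(γ-1) := ⟨_, rfl⟩
  have hApos : 0 < A := by rw [hAdef]; apply div_pos _ hγ'; nlinarith
  have hKpos : 0 < K := by rw [hKdef]; apply div_pos _ hγ'; linarith
  have hKA : A = K + γ := by rw [hKdef, hAdef]; field_simp; ring
  have h2A : (0:ℝ) < 2/A := by positivity
  obtain ⟨ρs, hrsdef⟩ : ∃ x : ℝ, x = (2/A) ^ (1/(γ-1)) := ⟨_, rfl⟩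
  have hρspos : 0 < ρs := hrsdef ▸ Real.rpow_pos_of_pos h2A _
  have hρsp : ρs ^ (γ-1) = 2/A := by
    rw [hrsdef, ← Real.rpow_mul h2A.le, one_div, inv_mul_cancel₀ (ne_of_gt hγ'), Real.rpow_one]
  have hBernU : ∀ r ≥ (1:ℝ), U r ^ 2 = 2 - K * ρ r ^ (γ-1) := by
    intro r hr
    have h := hbern r hr
    have hK2 : K = 2 * (γ/(γ-1)) := by rw [hKdef]; ring
    rw [hK2]; linarith [h]
  have hρ0s : ρ0 < ρs := by
    have h1 : q0 ^ 2 = 2 - K * ρ0 ^ (γ-1) := by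
      have := hBernU 1 le_rfl; rwa [hρ1, hU1] at this
    have h3 : ρ0 ^ (γ-1) < ρs ^ (γ-1) := by
      rw [hρsp, lt_div_iff₀ hApos, hKA]; nlinarith
    by_contra hc
    push_neg at hc
    exact absurd (Real.rpow_le_rpow hρspos.le hc hγ'.le) (not_le.mpr h3)
  obtain ⟨C, hCdef⟩ : ∃ C : ℝ, C = (ρ0*q0)^2 := ⟨_, rfl⟩
  have hCpos : 0 < C := by rw [hCdef]; positivity
  obtain ⟨F, hFdef⟩ : ∃ F : ℝ → ℝ, F = fun x => 2*x^2 - K * x^(γ+1) := ⟨_, rfl⟩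
  have hFval : ∀ r ≥ (1:ℝ), F (ρ r) = C / r^4 := by
    intro r hr
    have hrpos : (0:ℝ) < r := lt_of_lt_of_le one_pos hr
    have hρr := hρpos r hr
    have hsplit : ρ r ^ (γ+1) = ρ r ^ (γ-1) * ρ r^2 := by
      rw [← Real.rpow_natCast (ρ r) 2, ← Real.rpow_add hρr]
      norm_num
      congr 1
      ring
    have h1 : r ^ 4 * (ρ r ^2 * U r ^2) = C := by
      have h := hmass r hr
      rw [hCdef]
      calc r^4 * (ρ r^2 * U r^2) = (r^2 * ρ r * U r)^2 := by ring
        _ = (ρ0*q0)^2 := by rw [h]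
    have h2 := hBernU r hr
    have hFe : F (ρ r) = ρ r ^2 * U r ^2 := by
      simp only [hFdef]
      rw [h2, hsplit]; ring
    rw [hFe, eq_div_iff (by positivity : (r:ℝ)^4 ≠ 0)]
    linear_combination h1
  have hFmono : StrictMonoOn F (Set.Icc 0 ρs) := by
    rw [hFdef]
    apply strictMonoOn_of_deriv_pos (convex_Icc 0 ρs)
    · apply ContinuousOn.sub
      · exact (continuous_const.mul (continuous_pow 2)).continuousOn
      · exact fun x _ => (continuous_const.continuousWithinAt.mul
          (Real.continuousAt_rpow_const x (γ+1) (Or.inr (by linarith))).continuousWithinAt)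
    · intro x hx
      rw [interior_Icc] at hx
      obtain ⟨hx0, hxs⟩ := hx
      have hD : HasDerivAt (fun y:ℝ => 2*y^2 - K * y^(γ+1)) (2*(2*x) - K*((γ+1)*x^γ)) x := by
        have h1 : HasDerivAt (fun y:ℝ => 2*y^2) (2*(2*x)) x := by
          simpa using ((hasDerivAt_pow 2 x).const_mul 2)
        have h2 : HasDerivAt (fun y:ℝ => K * y^(γ+1)) (K*((γ+1)*x^γ)) x := by
          have h := (Real.hasDerivAt_rpow_const (x := x) (p := γ+1) (Or.inl hx0.ne')).const_mul K
          simpa [show γ+1-1 = γ by ring] using h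
        exact h1.sub h2
      rw [hD.deriv]
      have hxγ : x ^ γ = x * x^(γ-1) := by
        have h : x ^ γ = x ^ (1 + (γ-1)) := by norm_num
        rw [h, Real.rpow_add hx0, Real.rpow_one]
      have hxlt : x ^ (γ-1) < 2/A := by
        rw [← hρsp]; exact Real.rpow_lt_rpow hx0.le hxs hγ'
      have hK1 : K*(γ+1) = 2*A := by rw [hKdef, hAdef]; field_simp
      have hAx : A * x^(γ-1) < 2 := by
        rw [mul_comm]; exact (lt_div_iff₀ hApos).mp hxlt
      rw [hxγ]
      nlinarith [mul_pos hx0 (show (0:ℝ) < 2 - A*x^(γ-1) by linarith)]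
  have hρlt : ∀ r ≥ (1:ℝ), ρ r < ρs := by
    intro r hr
    by_contra hc
    push_neg at hc
    have hcont : ContinuousOn ρ (Set.Icc 1 r) :=
      hρs.continuousOn.mono Set.Icc_subset_Ici_self
    have hmem : ρs ∈ Set.Icc (ρ 1) (ρ r) := ⟨by rw [hρ1]; exact hρ0s.le, hc⟩
    obtain ⟨t, ht, hρt⟩ := intermediate_value_Icc hr hcont hmem
    have ht1 : (1:ℝ) ≤ t := ht.1
    have e1 : F ρ0 = C := by
      have h := hFval 1 le_rfl; rw [hρ1] at h; simpa using h
    have e2 : F ρs = C / t^4 := by rw [← hρt]; exact hFval t ht1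
    have e3 : F ρ0 < F ρs := hFmono ⟨hρ0.le, hρ0s.le⟩ ⟨hρspos.le, le_rfl⟩ hρ0s
    have e4 : C / t^4 ≤ C := by
      rw [div_le_iff₀ (by positivity)]
      have ht4 : (1:ℝ) ≤ t ^ 4 := by nlinarith [ht1, sq_nonneg t, sq_nonneg (t-1), sq_nonneg (t+1)]
      nlinarith [ht4]
    linarith [e1, e2, e3, e4]
  have hρmono : ∀ r s : ℝ, 1 ≤ r → r ≤ s → ρ s ≤ ρ r := by
    intro r s hr hrs2
    have hs : 1 ≤ s := le_trans hr hrs2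
    have h1 : F (ρ s) ≤ F (ρ r) := by
      rw [hFval r hr, hFval s hs]
      have h4 : r^4 ≤ s^4 := pow_le_pow_left₀ (by linarith) hrs2 4
      exact div_le_div_of_nonneg_left hCpos.le (by positivity) h4
    exact (hFmono.le_iff_le ⟨(hρpos s hs).le, (hρlt s hs).le⟩
      ⟨(hρpos r hr).le, (hρlt r hr).le⟩).mp h1
  have part1 : ∀ r s : ℝ, 1 ≤ r → r ≤ s →
      U r ^ 2 - γ * ρ r ^ (γ - 1) ≤ U s ^ 2 - γ * ρ s ^ (γ - 1) := by
    intro r s hr hrs2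
    have hs : 1 ≤ s := le_trans hr hrs2
    have hle : ρ s ^(γ-1) ≤ ρ r ^(γ-1) :=
      Real.rpow_le_rpow (hρpos s hs).le (hρmono r s hr hrs2) hγ'.le
    rw [hBernU r hr, hBernU s hs]
    linarith [mul_le_mul_of_nonneg_left hle hKpos.le,
      mul_le_mul_of_nonneg_left hle hγpos.le]
  have part2 : ∀ r ≥ (1:ℝ), q0 ^ 2 - γ * ρ0 ^ (γ - 1) ≤ U r ^ 2 - γ * ρ r ^ (γ - 1) := by
    intro r hr
    have h := part1 1 r le_rfl hr
    rwa [hρ1, hU1] at h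
  refine ⟨part1, part2, by linarith, ?_⟩
  intro r hr
  have hρr0 : ρ r ≤ ρ0 := by
    have h := hρmono 1 r le_rfl hr; rwa [hρ1] at h
  have hle : ρ r ^(γ-1) ≤ ρ0 ^(γ-1) :=
    Real.rpow_le_rpow (hρpos r hr).le hρr0 hγ'.le
  have h1 : q0 ^ 2 = 2 - K * ρ0 ^ (γ-1) := by
    have := hBernU 1 le_rfl; rwa [hρ1, hU1] at this
  have h2 := hBernU r hr
  have hU2 : q0 ^ 2 ≤ U r ^ 2 := by
    rw [h1, h2]
    linarith [mul_le_mul_of_nonneg_left hle hKpos.le]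
  nlinarith [hUpos r hr, hq0, hU2]
end

section
/- The background flow satisfies the asymptotic bounds: there exist constants 0 < c1 ≤ c2 such that for all r ≥ 1, c1 r^{−2} ≤ ρ̂(r) ≤ c2 r^{−2}, c1 r^{2(1−γ)} ≤ c²(ρ̂(r)) ≤ c2 r^{2(1−γ)}, |Û(r) − √2| ≤ c2 r^{2(1−γ)}, and 0 < Û'(r) ≤ c2 r^{1−2γ}. -/
open Set

set_option maxHeartbeats 1600000 in
/-- asymptotic bounds for the background flow:
ρ̂ ≍ r⁻², c²(ρ̂) ≍ r^(2(1−γ)), |Û − √2| ≲ r^(2(1−γ)), and 0 < Û' ≲ r^(1−2γ). -/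
theorem background_flow_asymptotics (γ ρ0 q0 : ℝ) (ρ U : ℝ → ℝ)
    (hγ1 : 1 < γ) (hγ2 : γ < 2) (hρ0 : 0 < ρ0) (hq0 : 0 < q0)
    (hsup0 : γ * ρ0 ^ (γ - 1) < q0 ^ 2)
    (hρs : ContDiffOn ℝ (⊤ : ℕ∞) ρ (Set.Ici 1)) (hUs : ContDiffOn ℝ (⊤ : ℕ∞) U (Set.Ici 1))
    (hρpos : ∀ r ≥ (1 : ℝ), 0 < ρ r) (hUpos : ∀ r ≥ (1 : ℝ), 0 < U r)
    (hmass : ∀ r ≥ (1 : ℝ), r ^ 2 * ρ r * U r = ρ0 * q0)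
    (hbern : ∀ r ≥ (1 : ℝ), U r ^ 2 / 2 + (γ / (γ - 1)) * ρ r ^ (γ - 1) = 1)
    (hρ1 : ρ 1 = ρ0) (hU1 : U 1 = q0)
    (hsup : ∀ r ≥ (1 : ℝ), γ * ρ r ^ (γ - 1) < U r ^ 2) :
    ∃ c1 c2 : ℝ, 0 < c1 ∧ c1 ≤ c2 ∧ ∀ r ≥ (1 : ℝ),
      c1 * r ^ (-2 : ℝ) ≤ ρ r ∧ ρ r ≤ c2 * r ^ (-2 : ℝ) ∧
      c1 * r ^ (2 * (1 - γ)) ≤ γ * ρ r ^ (γ - 1) ∧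
      γ * ρ r ^ (γ - 1) ≤ c2 * r ^ (2 * (1 - γ)) ∧
      |U r - Real.sqrt 2| ≤ c2 * r ^ (2 * (1 - γ)) ∧
      0 < derivWithin U (Set.Ici 1) r ∧
      derivWithin U (Set.Ici 1) r ≤ c2 * r ^ (1 - 2 * γ) := by
  have hγ0 : 0 < γ := by linarith
  have hγ1' : (0:ℝ) < γ - 1 := by linarith
  have hs2 : Real.sqrt 2 ^ 2 = 2 := Real.sq_sqrt (by norm_num)
  have hs2pos : 0 < Real.sqrt 2 := Real.sqrt_pos.2 (by norm_num)
  have hs2ge1 : (1:ℝ) ≤ Real.sqrt 2 := by nlinarith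
  -- U ≤ √2
  have hU2le : ∀ r ≥ (1:ℝ), U r ^ 2 ≤ 2 := by
    intro r hr
    have hb := hbern r hr
    have h0 : 0 < (γ / (γ - 1)) * ρ r ^ (γ - 1) := by
      have := hρpos r hr; positivity
    linarith
  have hUle : ∀ r ≥ (1:ℝ), U r ≤ Real.sqrt 2 := by
    intro r hr
    nlinarith [hU2le r hr, hUpos r hr, hs2pos, hs2]
  -- derivative formula
  have hform : ∀ r ≥ (1:ℝ), derivWithin U (Set.Ici 1) r
      = 2 * U r * (γ * ρ r ^ (γ-1)) / (r * (U r ^ 2 - γ * ρ r ^ (γ-1))) := by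
    intro r hr
    have hr0 : (0:ℝ) < r := lt_of_lt_of_le one_pos hr
    have hrmem : r ∈ Ici (1:ℝ) := hr
    have hud : UniqueDiffWithinAt ℝ (Ici (1:ℝ)) r := uniqueDiffOn_Ici 1 r hrmem
    have hρd : HasDerivWithinAt ρ (derivWithin ρ (Ici 1) r) (Ici 1) r :=
      ((hρs.differentiableOn (by simp)) r hrmem).hasDerivWithinAt
    have hUd : HasDerivWithinAt U (derivWithin U (Ici 1) r) (Ici 1) r :=
      ((hUs.differentiableOn (by simp)) r hrmem).hasDerivWithinAt
    set a := ρ r with ha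
    set u := U r with hu
    set a' := derivWithin ρ (Ici 1) r with ha'
    set u' := derivWithin U (Ici 1) r with hu'
    have hapos : 0 < a := hρpos r hr
    have hupos : 0 < u := hUpos r hr
    have hrd : HasDerivWithinAt (fun x : ℝ => x ^ 2) (2 * r) (Ici 1) r := by
      simpa using (hasDerivAt_pow 2 r).hasDerivWithinAt
    have hF : HasDerivWithinAt (fun x => x ^ 2 * ρ x * U x)
        ((2 * r * a + r ^ 2 * a') * u + r ^ 2 * a * u') (Ici 1) r := by
      have := ((hrd.mul hρd).mul hUd)
      exact this
    have hFc : HasDerivWithinAt (fun x => x ^ 2 * ρ x * U x) 0 (Ici 1) r := by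
      have : HasDerivWithinAt (fun _ : ℝ => ρ0 * q0) 0 (Ici 1) r := hasDerivWithinAt_const r _ _
      exact this.congr (fun x hx => hmass x hx) (hmass r hr)
    have hmd : (2 * r * a + r ^ 2 * a') * u + r ^ 2 * a * u' = 0 := by
      rw [← hF.derivWithin hud, hFc.derivWithin hud]
    have hBu : HasDerivWithinAt (fun x => U x ^ 2 / 2) (u * u') (Ici 1) r := by
      have h := (hUd.pow 2).div_const 2
      exact h.congr_deriv (by norm_num; ring)
    have hBρ : HasDerivWithinAt (fun x => (γ / (γ - 1)) * ρ x ^ (γ - 1))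
        ((γ / (γ - 1)) * (a' * (γ - 1) * a ^ (γ - 1 - 1))) (Ici 1) r :=
      (hρd.rpow_const (Or.inl (ne_of_gt hapos))).const_mul _
    have hG : HasDerivWithinAt (fun x => U x ^ 2 / 2 + (γ / (γ - 1)) * ρ x ^ (γ - 1))
        (u * u' + (γ / (γ - 1)) * (a' * (γ - 1) * a ^ (γ - 1 - 1))) (Ici 1) r := hBu.add hBρ
    have hGc : HasDerivWithinAt (fun x => U x ^ 2 / 2 + (γ / (γ - 1)) * ρ x ^ (γ - 1)) 0 (Ici 1) r := by
      have : HasDerivWithinAt (fun _ : ℝ => (1:ℝ)) 0 (Ici 1) r := hasDerivWithinAt_const r _ _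
      exact this.congr (fun x hx => hbern x hx) (hbern r hr)
    have hbernd : u * u' + (γ / (γ - 1)) * (a' * (γ - 1) * a ^ (γ - 1 - 1)) = 0 := by
      rw [← hG.derivWithin hud, hGc.derivWithin hud]
    have hγne : γ - 1 ≠ 0 := ne_of_gt hγ1'
    have hkey : u * u' + γ * a ^ (γ - 2) * a' = 0 := by
      have : (γ / (γ - 1)) * (a' * (γ - 1) * a ^ (γ - 1 - 1)) = γ * a ^ (γ - 2) * a' := by
        have h2 : γ - 1 - 1 = γ - 2 := by ring
        rw [h2]; field_simp
      linarith [hbernd, this.symm.le]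
    have haa : a ^ (γ - 2) * a = a ^ (γ - 1) := by
      rw [show γ - 1 = (γ - 2) + 1 by ring, Real.rpow_add hapos, Real.rpow_one]
    have hmain : u' * (r * (u ^ 2 - γ * a ^ (γ - 1))) = 2 * u * (γ * a ^ (γ - 1)) := by
      have h1 := hmd
      have h2 : 2 * r * (γ * a ^ (γ - 1)) * u + r ^ 2 * (γ * a ^ (γ - 2) * a') * u
          + r ^ 2 * (γ * a ^ (γ - 1)) * u' = 0 := by
        linear_combination γ * a ^ (γ - 2) * h1 - γ * (2 * r * u + r ^ 2 * u') * haa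
      have h3 : γ * a ^ (γ - 2) * a' = -(u * u') := by linarith
      rw [h3] at h2
      have hmain' : r * (u' * (r * (u ^ 2 - γ * a ^ (γ - 1)))) = r * (2 * u * (γ * a ^ (γ - 1))) := by
        linear_combination (-1 : ℝ) * h2
      exact mul_left_cancel₀ (ne_of_gt hr0) hmain'
    have hden : 0 < r * (u ^ 2 - γ * a ^ (γ - 1)) := by
      have h := hsup r hr
      have : 0 < u ^ 2 - γ * a ^ (γ - 1) := by linarith
      positivity
    rw [eq_div_iff (ne_of_gt hden)]
    exact hmain
  -- positivity of U'
  have hU'pos : ∀ r ≥ (1:ℝ), 0 < derivWithin U (Set.Ici 1) r := by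
    intro r hr
    rw [hform r hr]
    have hr0 : (0:ℝ) < r := lt_of_lt_of_le one_pos hr
    have h1 : 0 < U r ^ 2 - γ * ρ r ^ (γ - 1) := by linarith [hsup r hr]
    have h2 := hρpos r hr
    have h3 := hUpos r hr
    positivity
  -- monotonicity : q0 ≤ U r
  have hmono : MonotoneOn U (Ici (1:ℝ)) := by
    apply StrictMonoOn.monotoneOn
    apply strictMonoOn_of_deriv_pos (convex_Ici 1) (hUs.continuousOn)
    intro x hx
    rw [interior_Ici] at hx
    rw [← derivWithin_of_mem_nhds (Ici_mem_nhds hx)]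
    exact hU'pos x (le_of_lt hx)
  have hUq0 : ∀ r ≥ (1:ℝ), q0 ≤ U r := by
    intro r hr
    have := hmono (self_mem_Ici) hr hr
    rwa [hU1] at this
  -- density bounds
  have hrneg2 : ∀ r : ℝ, 1 ≤ r → r ^ (-2:ℝ) = (r ^ 2)⁻¹ := by
    intro r hr
    have hr0 : (0:ℝ) < r := lt_of_lt_of_le one_pos hr
    rw [show (-2:ℝ) = -((2:ℕ):ℝ) by norm_num, Real.rpow_neg hr0.le, Real.rpow_natCast]
  set m := ρ0 * q0 with hm
  have hmpos : 0 < m := mul_pos hρ0 hq0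
  set c1ρ := m / Real.sqrt 2 with hc1ρ
  have hc1ρpos : 0 < c1ρ := div_pos hmpos hs2pos
  have hρlow : ∀ r ≥ (1:ℝ), c1ρ * r ^ (-2:ℝ) ≤ ρ r := by
    intro r hr
    have hr0 : (0:ℝ) < r := lt_of_lt_of_le one_pos hr
    have hr2 : (0:ℝ) < r ^ 2 := by positivity
    rw [hrneg2 r hr, hc1ρ, div_mul_eq_mul_div, div_le_iff₀ hs2pos, ← div_eq_mul_inv,
      div_le_iff₀ hr2]
    nlinarith [hmass r hr, hUle r hr, hρpos r hr, hUpos r hr]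
  have hρhigh : ∀ r ≥ (1:ℝ), ρ r ≤ ρ0 * r ^ (-2:ℝ) := by
    intro r hr
    have hr0 : (0:ℝ) < r := lt_of_lt_of_le one_pos hr
    have hr2 : (0:ℝ) < r ^ 2 := by positivity
    rw [hrneg2 r hr, ← div_eq_mul_inv, le_div_iff₀ hr2]
    nlinarith [hmass r hr, hUq0 r hr, hρpos r hr]
  -- rpow exponent juggling
  have hpowsplit : ∀ (A : ℝ), 0 ≤ A → ∀ r : ℝ, 1 ≤ r →
      (A * r ^ (-2:ℝ)) ^ (γ - 1) = A ^ (γ - 1) * r ^ (2 * (1 - γ)) := by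
    intro A hA r hr
    have hr0 : (0:ℝ) < r := lt_of_lt_of_le one_pos hr
    rw [Real.mul_rpow hA (by positivity), show 2 * (1 - γ) = -2 * (γ - 1) by ring,
      Real.rpow_mul hr0.le]
  -- sound speed bounds
  set cγl := γ * c1ρ ^ (γ - 1) with hcγl
  set cγh := γ * ρ0 ^ (γ - 1) with hcγh
  have hcγlpos : 0 < cγl := by
    have := Real.rpow_pos_of_pos hc1ρpos (γ - 1); positivity
  have hcγhpos : 0 < cγh := by
    have := Real.rpow_pos_of_pos hρ0 (γ - 1); positivity
  have hclow : ∀ r ≥ (1:ℝ), cγl * r ^ (2 * (1 - γ)) ≤ γ * ρ r ^ (γ - 1) := by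
    intro r hr
    have h1 : (c1ρ * r ^ (-2:ℝ)) ^ (γ - 1) ≤ ρ r ^ (γ - 1) :=
      Real.rpow_le_rpow (by positivity) (hρlow r hr) (le_of_lt hγ1')
    rw [hpowsplit c1ρ hc1ρpos.le r hr] at h1
    calc cγl * r ^ (2 * (1 - γ)) = γ * (c1ρ ^ (γ - 1) * r ^ (2 * (1 - γ))) := by ring
    _ ≤ γ * ρ r ^ (γ - 1) := by nlinarith
  have hchigh : ∀ r ≥ (1:ℝ), γ * ρ r ^ (γ - 1) ≤ cγh * r ^ (2 * (1 - γ)) := by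
    intro r hr
    have h1 : ρ r ^ (γ - 1) ≤ (ρ0 * r ^ (-2:ℝ)) ^ (γ - 1) :=
      Real.rpow_le_rpow (le_of_lt (hρpos r hr)) (hρhigh r hr) (le_of_lt hγ1')
    rw [hpowsplit ρ0 hρ0.le r hr] at h1
    calc γ * ρ r ^ (γ - 1) ≤ γ * (ρ0 ^ (γ - 1) * r ^ (2 * (1 - γ))) := by nlinarith
    _ = cγh * r ^ (2 * (1 - γ)) := by ring
  -- velocity bound
  set cU := (2 * γ / (γ - 1)) * ρ0 ^ (γ - 1) with hcU
  have hUbd : ∀ r ≥ (1:ℝ), |U r - Real.sqrt 2| ≤ cU * r ^ (2 * (1 - γ)) := by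
    intro r hr
    rw [abs_sub_comm, abs_of_nonneg (sub_nonneg.2 (hUle r hr))]
    have h1 : Real.sqrt 2 - U r ≤ 2 - U r ^ 2 := by
      nlinarith [hUpos r hr, hUle r hr, hs2]
    have h2 : 2 - U r ^ 2 = (2 * γ / (γ - 1)) * ρ r ^ (γ - 1) := by
      have hb := hbern r hr
      field_simp at hb ⊢
      linarith
    have h3 : ρ r ^ (γ - 1) ≤ ρ0 ^ (γ - 1) * r ^ (2 * (1 - γ)) := by
      have h1' : ρ r ^ (γ - 1) ≤ (ρ0 * r ^ (-2:ℝ)) ^ (γ - 1) :=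
        Real.rpow_le_rpow (le_of_lt (hρpos r hr)) (hρhigh r hr) (le_of_lt hγ1')
      rwa [hpowsplit ρ0 hρ0.le r hr] at h1'
    have hcoef : (0:ℝ) < 2 * γ / (γ - 1) := by positivity
    calc Real.sqrt 2 - U r ≤ (2 * γ / (γ - 1)) * ρ r ^ (γ - 1) := by rw [← h2]; exact h1
    _ ≤ (2 * γ / (γ - 1)) * (ρ0 ^ (γ - 1) * r ^ (2 * (1 - γ))) :=
        mul_le_mul_of_nonneg_left h3 hcoef.le
    _ = cU * r ^ (2 * (1 - γ)) := by rw [hcU]; ring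
  -- uniform gap δ
  set δ := q0 ^ 2 - γ * ρ0 ^ (γ - 1) with hδdef
  have hδpos : 0 < δ := by rw [hδdef]; linarith
  have hρ0e : ρ 1 ^ (γ - 1) = ρ0 ^ (γ - 1) := by rw [hρ1]
  have hgap : ∀ r ≥ (1:ℝ), δ ≤ U r ^ 2 - γ * ρ r ^ (γ - 1) := by
    intro r hr
    have hb := hbern r hr
    have hb1 := hbern 1 le_rfl
    rw [hU1, hρ0e] at hb1
    have hU2 : q0 ^ 2 ≤ U r ^ 2 := pow_le_pow_left₀ hq0.le (hUq0 r hr) 2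
    have hc : γ * ρ r ^ (γ - 1) ≤ γ * ρ0 ^ (γ - 1) := by
      have hq : (γ / (γ - 1)) * ρ r ^ (γ - 1) ≤ (γ / (γ - 1)) * ρ0 ^ (γ - 1) := by linarith
      have h2 : ρ r ^ (γ - 1) ≤ ρ0 ^ (γ - 1) := by
        have hcoef : (0:ℝ) < γ / (γ - 1) := by positivity
        exact le_of_mul_le_mul_left hq hcoef
      exact mul_le_mul_of_nonneg_left h2 hγ0.le
    rw [hδdef]; linarith
  -- U' bound
  set cD := 2 * Real.sqrt 2 * cγh / δ with hcD
  have hU'bd : ∀ r ≥ (1:ℝ), derivWithin U (Set.Ici 1) r ≤ cD * r ^ (1 - 2*γ) := by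
    intro r hr
    have hr0 : (0:ℝ) < r := lt_of_lt_of_le one_pos hr
    rw [hform r hr]
    have hC : 0 < γ * ρ r ^ (γ - 1) := by
      have := hρpos r hr
      have := Real.rpow_pos_of_pos (hρpos r hr) (γ - 1)
      positivity
    have step1 : 2 * U r * (γ * ρ r ^ (γ-1)) / (r * (U r ^ 2 - γ * ρ r ^ (γ-1)))
        ≤ (2 * Real.sqrt 2 * (γ * ρ r ^ (γ-1))) / (r * δ) := by
      apply div_le_div₀ (by positivity) _ (by positivity) _
      · nlinarith [hUle r hr]
      · have := hgap r hr
        nlinarith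
    have step2 : (2 * Real.sqrt 2 * (γ * ρ r ^ (γ-1))) / (r * δ)
        ≤ cD * r ^ (1 - 2*γ) := by
      have hch := hchigh r hr
      have hrpow : r ^ (2 * (1 - γ)) * r⁻¹ = r ^ (1 - 2*γ) := by
        rw [← Real.rpow_neg_one r, ← Real.rpow_add hr0]
        ring_nf
      rw [div_le_iff₀ (by positivity), hcD]
      have hpowpos : (0:ℝ) < r ^ (1 - 2*γ) := Real.rpow_pos_of_pos hr0 _
      have key : 2 * Real.sqrt 2 * (γ * ρ r ^ (γ-1)) ≤ 2 * Real.sqrt 2 * (cγh * r ^ (2 * (1-γ))) := by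
        nlinarith
      calc 2 * Real.sqrt 2 * (γ * ρ r ^ (γ-1)) ≤ 2 * Real.sqrt 2 * (cγh * r ^ (2 * (1-γ))) := key
      _ = (2 * Real.sqrt 2 * cγh / δ) * (r ^ (2 * (1-γ)) * r⁻¹) * (r * δ) := by
          field_simp
      _ = 2 * Real.sqrt 2 * cγh / δ * r ^ (1 - 2*γ) * (r * δ) := by rw [hrpow]
    linarith
  -- assemble
  refine ⟨min c1ρ cγl, max (min c1ρ cγl) (max (max ρ0 cγh) (max cU cD)),
    lt_min hc1ρpos hcγlpos, le_max_left _ _, ?_⟩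
  intro r hr
  have hr0 : (0:ℝ) < r := lt_of_lt_of_le one_pos hr
  have hp2 : (0:ℝ) < r ^ (-2:ℝ) := Real.rpow_pos_of_pos hr0 _
  have hp1 : (0:ℝ) < r ^ (2*(1-γ)) := Real.rpow_pos_of_pos hr0 _
  have hp3 : (0:ℝ) < r ^ (1-2*γ) := Real.rpow_pos_of_pos hr0 _
  have hb1 : ρ0 ≤ max (min c1ρ cγl) (max (max ρ0 cγh) (max cU cD)) :=
    le_trans (le_trans (le_max_left _ _) (le_max_left _ _)) (le_max_right _ _)
  have hb2 : cγh ≤ max (min c1ρ cγl) (max (max ρ0 cγh) (max cU cD)) :=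
    le_trans (le_trans (le_max_right _ _) (le_max_left _ _)) (le_max_right _ _)
  have hb3 : cU ≤ max (min c1ρ cγl) (max (max ρ0 cγh) (max cU cD)) :=
    le_trans (le_trans (le_max_left _ _) (le_max_right _ _)) (le_max_right _ _)
  have hb4 : cD ≤ max (min c1ρ cγl) (max (max ρ0 cγh) (max cU cD)) :=
    le_trans (le_trans (le_max_right _ _) (le_max_right _ _)) (le_max_right _ _)
  refine ⟨?_, ?_, ?_, ?_, ?_, hU'pos r hr, ?_⟩
  · calc min c1ρ cγl * r ^ (-2:ℝ) ≤ c1ρ * r ^ (-2:ℝ) :=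
        mul_le_mul_of_nonneg_right (min_le_left _ _) hp2.le
    _ ≤ ρ r := hρlow r hr
  · exact le_trans (hρhigh r hr) (mul_le_mul_of_nonneg_right hb1 hp2.le)
  · calc min c1ρ cγl * r ^ (2*(1-γ)) ≤ cγl * r ^ (2*(1-γ)) :=
        mul_le_mul_of_nonneg_right (min_le_right _ _) hp1.le
    _ ≤ γ * ρ r ^ (γ - 1) := hclow r hr
  · exact le_trans (hchigh r hr) (mul_le_mul_of_nonneg_right hb2 hp1.le)
  · exact le_trans (hUbd r hr) (mul_le_mul_of_nonneg_right hb3 hp1.le)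
  · exact le_trans (hU'bd r hr) (mul_le_mul_of_nonneg_right hb4 hp3.le)
end

section
/- Let P2(r) = 2((γ−1)Û⁴ + c⁴(ρ̂) + Û²c²(ρ̂))/(Û² − c²(ρ̂))² for the background supersonic flow with 1 < γ < 2. Then P2(r) > 0 for all r ≥ 1, and P2(r) → 2(γ−1) as r → ∞, with |P2(r) − 2(γ−1)| ≤ C r^{2(1−γ)} for some constant C. -/
/-- P₂(r) = 2((γ−1)Û⁴ + c⁴(ρ̂) + Û²c²(ρ̂))/(Û² − c²(ρ̂))² with c²(ρ) = γρ^(γ−1). -/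
noncomputable def P2fun (γ : ℝ) (ρ U : ℝ → ℝ) (s : ℝ) : ℝ :=
  2 * ((γ - 1) * U s ^ 4 + (γ * ρ s ^ (γ - 1)) ^ 2 + U s ^ 2 * (γ * ρ s ^ (γ - 1))) /
    (U s ^ 2 - γ * ρ s ^ (γ - 1)) ^ 2

private lemma P2_sub_algebra (γ v c : ℝ) (h : v ^ 2 - c ≠ 0) :
    2 * ((γ - 1) * v ^ 4 + c ^ 2 + v ^ 2 * c) / (v ^ 2 - c) ^ 2 - 2 * (γ - 1) =
      2 * c * ((2 * γ - 1) * v ^ 2 + (2 - γ) * c) / (v ^ 2 - c) ^ 2 := by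
  field_simp
  ring

set_option maxHeartbeats 1600000 in
/-- P₂ > 0, P₂(r) → 2(γ−1) as r → ∞, with |P₂(r) − 2(γ−1)| ≤ C r^(2(1−γ)). -/
theorem P2_positive_limit (γ ρ0 q0 : ℝ) (ρ U : ℝ → ℝ)
    (hγ1 : 1 < γ) (hγ2 : γ < 2) (hρ0 : 0 < ρ0) (hq0 : 0 < q0)
    (hsup0 : γ * ρ0 ^ (γ - 1) < q0 ^ 2)
    (hρs : ContDiffOn ℝ (⊤ : ℕ∞) ρ (Set.Ici 1)) (hUs : ContDiffOn ℝ (⊤ : ℕ∞) U (Set.Ici 1))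
    (hρpos : ∀ r ≥ (1 : ℝ), 0 < ρ r) (hUpos : ∀ r ≥ (1 : ℝ), 0 < U r)
    (hmass : ∀ r ≥ (1 : ℝ), r ^ 2 * ρ r * U r = ρ0 * q0)
    (hbern : ∀ r ≥ (1 : ℝ), U r ^ 2 / 2 + (γ / (γ - 1)) * ρ r ^ (γ - 1) = 1)
    (hρ1 : ρ 1 = ρ0) (hU1 : U 1 = q0)
    (hsup : ∀ r ≥ (1 : ℝ), γ * ρ r ^ (γ - 1) < U r ^ 2) :
    (∀ r ≥ (1 : ℝ), 0 < P2fun γ ρ U r) ∧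
    Filter.Tendsto (P2fun γ ρ U) Filter.atTop (nhds (2 * (γ - 1))) ∧
    ∃ C : ℝ, 0 < C ∧ ∀ r ≥ (1 : ℝ),
      |P2fun γ ρ U r - 2 * (γ - 1)| ≤ C * r ^ (2 * (1 - γ)) := by
  have hγ0 : 0 < γ - 1 := by linarith
  have hγne : γ - 1 ≠ 0 := ne_of_gt hγ0
  -- notation
  set c : ℝ → ℝ := fun r => γ * ρ r ^ (γ - 1) with hc_def
  -- basic pointwise facts
  have hc_pos : ∀ r ≥ (1 : ℝ), 0 < c r := by
    intro r hr
    exact mul_pos (by linarith) (Real.rpow_pos_of_pos (hρpos r hr) _)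
  have hrel : ∀ r ≥ (1 : ℝ), (γ - 1) * U r ^ 2 + 2 * c r = 2 * (γ - 1) := by
    intro r hr
    have hb := hbern r hr
    have : (γ / (γ - 1)) * ρ r ^ (γ - 1) = c r / (γ - 1) := by
      simp only [hc_def]; field_simp
    rw [this] at hb
    field_simp at hb
    linarith
  have hu2 : ∀ r ≥ (1 : ℝ), U r ^ 2 < 2 := by
    intro r hr
    have h1 := hrel r hr
    have h2 := hc_pos r hr
    nlinarith
  have hum : ∀ r ≥ (1 : ℝ), 2 * (γ - 1) / (γ + 1) < U r ^ 2 := by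
    intro r hr
    have h1 := hrel r hr
    have h2 : c r < U r ^ 2 := hsup r hr
    rw [div_lt_iff₀ (by linarith : (0:ℝ) < γ + 1)]
    nlinarith
  have hcm : ∀ r ≥ (1 : ℝ), c r < 2 * (γ - 1) / (γ + 1) := by
    intro r hr
    have h1 := hrel r hr
    have h2 : c r < U r ^ 2 := hsup r hr
    rw [lt_div_iff₀ (by linarith : (0:ℝ) < γ + 1)]
    nlinarith
  -- set m and K
  set m : ℝ := 2 * (γ - 1) / (γ + 1) with hm_def
  have hm_pos : 0 < m := by positivity
  have hsqrtm : 0 < Real.sqrt m := Real.sqrt_pos.mpr hm_pos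
  set A : ℝ := ρ0 * q0 / Real.sqrt m with hA_def
  have hA_pos : 0 < A := by positivity
  set K : ℝ := γ * A ^ (γ - 1) with hK_def
  have hK_pos : 0 < K := mul_pos (by linarith) (Real.rpow_pos_of_pos hA_pos _)
  -- decay of c
  have hcK : ∀ r ≥ (1 : ℝ), c r ≤ K * r ^ (2 * (1 - γ)) := by
    intro r hr
    have hr0 : 0 < r := by linarith
    have hUm : Real.sqrt m ≤ U r := by
      have h1 : Real.sqrt m ≤ Real.sqrt (U r ^ 2) := Real.sqrt_le_sqrt (hum r hr).le
      rwa [Real.sqrt_sq (hUpos r hr).le] at h1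
    have hρA : ρ r ≤ A / r ^ 2 := by
      have hmass' := hmass r hr
      have hUr := hUpos r hr
      have h5 : ρ r = ρ0 * q0 / (r ^ 2 * U r) := by
        field_simp
        linear_combination hmass'
      rw [h5, hA_def, div_div]
      apply div_le_div_of_nonneg_left (by positivity) (by positivity)
      nlinarith [hUm, sq_nonneg r]
    have hp : ρ r ^ (γ - 1) ≤ (A / r ^ 2) ^ (γ - 1) :=
      Real.rpow_le_rpow (hρpos r hr).le hρA hγ0.le
    have hAr : (A / r ^ 2) ^ (γ - 1) = A ^ (γ - 1) * r ^ (2 * (1 - γ)) := by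
      rw [Real.div_rpow hA_pos.le (by positivity)]
      have h7 : ((r ^ 2 : ℝ)) ^ (γ - 1) = r ^ (2 * (γ - 1)) := by
        rw [← Real.rpow_natCast r 2, ← Real.rpow_mul hr0.le]
        norm_num
      rw [h7, div_eq_mul_inv, ← Real.rpow_neg hr0.le]
      ring_nf
    calc c r = γ * ρ r ^ (γ - 1) := rfl
      _ ≤ γ * (A ^ (γ - 1) * r ^ (2 * (1 - γ))) := by
          rw [← hAr]; exact mul_le_mul_of_nonneg_left hp (by linarith)
      _ = K * r ^ (2 * (1 - γ)) := by rw [hK_def]; ring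
  -- K * r^(2(1-γ)) → 0
  have hten : Filter.Tendsto (fun r : ℝ => K * r ^ (2 * (1 - γ)))
      Filter.atTop (nhds 0) := by
    have h0 : Filter.Tendsto (fun r : ℝ => r ^ (-(2 * (γ - 1))))
        Filter.atTop (nhds 0) := tendsto_rpow_neg_atTop (by linarith)
    have he : 2 * (1 - γ) = -(2 * (γ - 1)) := by ring
    rw [he]
    simpa using h0.const_mul K
  -- eventually small
  have hev : ∀ᶠ r : ℝ in Filter.atTop, K * r ^ (2 * (1 - γ)) < (γ - 1) / (γ + 1) := by
    exact hten.eventually (gt_mem_nhds (by positivity))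
  obtain ⟨R, hR⟩ := Filter.eventually_atTop.mp hev
  set R' : ℝ := max R 1 with hR'_def
  -- minimum of u - c on [1, R']
  have hcont : ContinuousOn (fun r => U r ^ 2 - c r) (Set.Icc 1 R') := by
    have hsub : Set.Icc (1:ℝ) R' ⊆ Set.Ici 1 := fun x hx => hx.1
    have h1 : ContinuousOn U (Set.Icc 1 R') := (hUs.continuousOn).mono hsub
    have h2 : ContinuousOn ρ (Set.Icc 1 R') := (hρs.continuousOn).mono hsub
    exact (h1.pow 2).sub ((continuousOn_const).mul
      (h2.rpow_const fun x _ => Or.inr hγ0.le))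
  have hne : (Set.Icc (1:ℝ) R').Nonempty := ⟨1, Set.mem_Icc.mpr ⟨le_refl 1, le_max_right R 1⟩⟩
  obtain ⟨x0, hx0mem, hx0min⟩ := (isCompact_Icc).exists_isMinOn hne hcont
  have hx0ge : (1:ℝ) ≤ x0 := (Set.mem_Icc.mp hx0mem).1
  set δ0 : ℝ := U x0 ^ 2 - c x0 with hδ0_def
  have hδ0_pos : 0 < δ0 := sub_pos.mpr (hsup x0 hx0ge)
  set δ : ℝ := min δ0 1 with hδ_def
  have hδ_pos : 0 < δ := lt_min hδ0_pos one_pos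
  have hδ_le : ∀ r ≥ (1 : ℝ), δ ≤ U r ^ 2 - c r := by
    intro r hr
    by_cases hcase : r ≤ R'
    · have hrmem : r ∈ Set.Icc (1:ℝ) R' := Set.mem_Icc.mpr ⟨hr, hcase⟩
      have := hx0min hrmem
      calc δ ≤ δ0 := min_le_left _ _
        _ ≤ U r ^ 2 - c r := this
    · push_neg at hcase
      have hrR : R ≤ r := le_trans (le_max_left R 1) hcase.le
      have hsmall := hR r hrR
      have hcb : c r < (γ - 1) / (γ + 1) := lt_of_le_of_lt (hcK r hr) hsmall
      have h1 := hrel r hr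
      have : (1:ℝ) ≤ U r ^ 2 - c r := by
        rw [lt_div_iff₀ (by linarith : (0:ℝ) < γ + 1)] at hcb
        nlinarith
      calc δ ≤ 1 := min_le_right _ _
        _ ≤ U r ^ 2 - c r := this
  -- pointwise bound
  set C : ℝ := 4 * (γ + 1) * K / δ ^ 2 with hC_def
  have hC_pos : 0 < C := by positivity
  have hbound : ∀ r ≥ (1 : ℝ), |P2fun γ ρ U r - 2 * (γ - 1)| ≤ C * r ^ (2 * (1 - γ)) := by
    intro r hr
    have hd : δ ≤ U r ^ 2 - c r := hδ_le r hr
    have hd_pos : 0 < U r ^ 2 - c r := lt_of_lt_of_le hδ_pos hd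
    have hd_ne : U r ^ 2 - c r ≠ 0 := ne_of_gt hd_pos
    have hcr := hc_pos r hr
    have hu2r := hu2 r hr
    have hcmr := hcm r hr
    have hc2 : c r < 2 := by
      have : m < 2 := by rw [hm_def, div_lt_iff₀ (by linarith : (0:ℝ) < γ + 1)]; nlinarith
      linarith [hcmr]
    have hPf : P2fun γ ρ U r =
        2 * ((γ - 1) * U r ^ 4 + (c r) ^ 2 + U r ^ 2 * c r) / (U r ^ 2 - c r) ^ 2 := rfl
    have heq : P2fun γ ρ U r - 2 * (γ - 1) =
        2 * c r * ((2 * γ - 1) * U r ^ 2 + (2 - γ) * c r) / (U r ^ 2 - c r) ^ 2 := by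
      rw [hPf]; exact P2_sub_algebra γ (U r) (c r) hd_ne
    rw [heq]
    have hu_pos : 0 < U r ^ 2 := pow_pos (hUpos r hr) 2
    have hnum_pos : 0 < 2 * c r * ((2 * γ - 1) * U r ^ 2 + (2 - γ) * c r) := by
      have ha : 0 < (2 * γ - 1) * U r ^ 2 := mul_pos (by linarith) hu_pos
      have hb : 0 < (2 - γ) * c r := mul_pos (by linarith) hcr
      exact mul_pos (by linarith) (by linarith)
    rw [abs_of_pos (div_pos hnum_pos (by positivity))]
    have h9 : c r * U r ^ 2 ≤ c r * 2 := mul_le_mul_of_nonneg_left hu2r.le hcr.le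
    have h10 : c r * c r ≤ c r * 2 := mul_le_mul_of_nonneg_left hc2.le hcr.le
    have hstep1 : 2 * c r * ((2 * γ - 1) * U r ^ 2 + (2 - γ) * c r) / (U r ^ 2 - c r) ^ 2
        ≤ 4 * (γ + 1) * c r / δ ^ 2 := by
      apply div_le_div₀ (by positivity) ?_ (by positivity) ?_
      · nlinarith [h9, h10]
      · exact pow_le_pow_left₀ hδ_pos.le hd 2
    have hstep2 : 4 * (γ + 1) * c r / δ ^ 2 ≤ C * r ^ (2 * (1 - γ)) := by
      rw [hC_def]
      have h8 : 4 * (γ + 1) * c r ≤ 4 * (γ + 1) * (K * r ^ (2 * (1 - γ))) :=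
        mul_le_mul_of_nonneg_left (hcK r hr) (by linarith)
      calc 4 * (γ + 1) * c r / δ ^ 2
          ≤ 4 * (γ + 1) * (K * r ^ (2 * (1 - γ))) / δ ^ 2 :=
            div_le_div_of_nonneg_right h8 (by positivity) |>.trans_eq rfl
        _ = 4 * (γ + 1) * K / δ ^ 2 * r ^ (2 * (1 - γ)) := by ring
    linarith
  refine ⟨?_, ?_, ⟨C, hC_pos, hbound⟩⟩
  · intro r hr
    have hcr := hc_pos r hr
    have hd_pos : 0 < U r ^ 2 - c r := sub_pos.mpr (hsup r hr)
    have hu_pos : 0 < U r ^ 2 := pow_pos (hUpos r hr) 2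
    have hcr' : 0 < γ * ρ r ^ (γ - 1) := hcr
    unfold P2fun
    apply div_pos
    · have h1 : 0 < (γ - 1) * U r ^ 4 := mul_pos hγ0 (pow_pos (hUpos r hr) 4)
      have h2 : 0 < (γ * ρ r ^ (γ - 1)) ^ 2 := pow_pos hcr' 2
      have h3 : 0 < U r ^ 2 * (γ * ρ r ^ (γ - 1)) := mul_pos hu_pos hcr'
      linarith
    · have hd' : 0 < U r ^ 2 - γ * ρ r ^ (γ - 1) := hd_pos
      positivity
  · -- tendsto
    have hgz : Filter.Tendsto (fun r : ℝ => C * r ^ (2 * (1 - γ)))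
        Filter.atTop (nhds 0) := by
      have h0 : Filter.Tendsto (fun r : ℝ => r ^ (-(2 * (γ - 1))))
          Filter.atTop (nhds 0) := tendsto_rpow_neg_atTop (by linarith)
      have he : 2 * (1 - γ) = -(2 * (γ - 1)) := by ring
      rw [he]
      simpa using h0.const_mul C
    have hzero : Filter.Tendsto (fun r => P2fun γ ρ U r - 2 * (γ - 1))
        Filter.atTop (nhds 0) := by
      apply squeeze_zero_norm' ?_ hgz
      filter_upwards [Filter.eventually_ge_atTop (1:ℝ)] with r hr
      simpa [Real.norm_eq_abs] using hbound r hr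
    have := hzero.add_const (2 * (γ - 1))
    simpa using this
end

section
/- Let 1 < γ < 2, μ = 4γ − 6, δ > 0, and a(r) = 1 + r^{−δ}. For the background supersonic flow, the multiplier coefficient satisfies (P2(r) − (μ+2)/2)·a(r) − ½ r a'(r) > ½ δ r^{−δ} for all r ≥ 1, where P2(r) = 2((γ−1)Û⁴ + c⁴(ρ̂) + Û²c²(ρ̂))/(Û² − c²(ρ̂))². -/
/-- with μ = 4γ−6 and a(r) = 1 + r^(−δ),
(P₂(r) − (μ+2)/2)·a(r) − ½ r a'(r) > ½ δ r^(−δ) for all r ≥ 1. -/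
theorem multiplier_coefficient_positive (γ ρ0 q0 δ : ℝ) (ρ U : ℝ → ℝ)
    (hγ1 : 1 < γ) (hγ2 : γ < 2) (hρ0 : 0 < ρ0) (hq0 : 0 < q0) (hδ : 0 < δ)
    (hsup0 : γ * ρ0 ^ (γ - 1) < q0 ^ 2)
    (hρs : ContDiffOn ℝ (⊤ : ℕ∞) ρ (Set.Ici 1)) (hUs : ContDiffOn ℝ (⊤ : ℕ∞) U (Set.Ici 1))
    (hρpos : ∀ r ≥ (1 : ℝ), 0 < ρ r) (hUpos : ∀ r ≥ (1 : ℝ), 0 < U r)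
    (hmass : ∀ r ≥ (1 : ℝ), r ^ 2 * ρ r * U r = ρ0 * q0)
    (hbern : ∀ r ≥ (1 : ℝ), U r ^ 2 / 2 + (γ / (γ - 1)) * ρ r ^ (γ - 1) = 1)
    (hρ1 : ρ 1 = ρ0) (hU1 : U 1 = q0)
    (hsup : ∀ r ≥ (1 : ℝ), γ * ρ r ^ (γ - 1) < U r ^ 2) :
    ∀ r ≥ (1 : ℝ),
      (P2fun γ ρ U r - ((4 * γ - 6) + 2) / 2) * (1 + r ^ (-δ)) -
          (1 / 2) * r * deriv (fun s : ℝ => 1 + s ^ (-δ)) r >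
        (1 / 2) * δ * r ^ (-δ) := by
  intro r hr
  have hr0 : (0:ℝ) < r := lt_of_lt_of_le one_pos hr
  have hderiv : deriv (fun s : ℝ => 1 + s ^ (-δ)) r = -δ * r ^ (-δ - 1) := by
    have h : HasDerivAt (fun s : ℝ => 1 + s ^ (-δ)) (-δ * r ^ (-δ - 1)) r := by
      have := (Real.hasDerivAt_rpow_const (p := -δ) (Or.inl hr0.ne')).const_add (1:ℝ)
      simpa using this
    exact h.deriv
  rw [hderiv]
  have hc2 : 0 < γ * ρ r ^ (γ - 1) :=
    mul_pos (by linarith) (Real.rpow_pos_of_pos (hρpos r hr) _)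
  have hU2 : γ * ρ r ^ (γ - 1) < U r ^ 2 := hsup r hr
  have hd : 0 < (U r ^ 2 - γ * ρ r ^ (γ - 1)) ^ 2 := by
    have : U r ^ 2 - γ * ρ r ^ (γ - 1) ≠ 0 := by linarith
    positivity
  have hP2 : P2fun γ ρ U r - ((4 * γ - 6) + 2) / 2 > 0 := by
    have : (2 * γ - 2) < P2fun γ ρ U r := by
      rw [P2fun, lt_div_iff₀ hd]
      nlinarith [mul_pos hc2 hc2, mul_pos (hc2.trans hU2) hc2]
    linarith
  have ha : (0:ℝ) < 1 + r ^ (-δ) := by positivity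
  have hrr : r * r ^ (-δ - 1) = r ^ (-δ) := by
    have h2 := Real.rpow_add hr0 1 (-δ - 1)
    rw [Real.rpow_one, show (1:ℝ) + (-δ - 1) = -δ by ring] at h2
    exact h2.symm
  have key : (0:ℝ) < (P2fun γ ρ U r - ((4 * γ - 6) + 2) / 2) * (1 + r ^ (-δ)) :=
    mul_pos hP2 ha
  have : (1 / 2 : ℝ) * r * (-δ * r ^ (-δ - 1)) = -(1/2 * δ * r ^ (-δ)) := by
    rw [show (1 / 2 : ℝ) * r * (-δ * r ^ (-δ - 1)) = -(1/2 * δ * (r * r ^ (-δ-1))) by ring, hrr]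
  linarith [this.ge]
end

section
/- Let 1 < γ < 2, μ = 4γ − 6, δ > 0, a(r) = 1 + r^{−δ}, and P1(r) = c²(ρ̂(r))/(Û(r)² − c²(ρ̂(r))). For the background supersonic flow there is a constant C > 0 such that for all r ≥ 1, −(μ P1(r) + r P1'(r)) a(r) − r a'(r) P1(r) ≥ (2 c²(ρ̂)(2−γ)Û⁴)/(Û²−c²(ρ̂))³ ≥ C r^{−2(γ−1)}. -/
/-- P₁(r) = c²(ρ̂(r))/(Û(r)² − c²(ρ̂(r))) with c²(ρ) = γρ^(γ−1). -/
noncomputable def P1fun (γ : ℝ) (ρ U : ℝ → ℝ) (s : ℝ) : ℝ :=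
  γ * ρ s ^ (γ - 1) / (U s ^ 2 - γ * ρ s ^ (γ - 1))

set_option maxHeartbeats 1000000 in
/-- with μ = 4γ−6, a(r) = 1 + r^(−δ), there is C > 0 such that
−(μP₁ + rP₁')a − ra'P₁ ≥ 2c²(ρ̂)(2−γ)Û⁴/(Û²−c²(ρ̂))³ ≥ C r^(−2(γ−1)) on [1,∞). -/
theorem multiplier_coefficient_P1 (γ ρ0 q0 δ c1 : ℝ) (ρ U : ℝ → ℝ)
    (hγ1 : 1 < γ) (hγ2 : γ < 2) (hρ0 : 0 < ρ0) (hq0 : 0 < q0) (hδ : 0 < δ)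
    (hc1 : 0 < c1)
    (hsup0 : γ * ρ0 ^ (γ - 1) < q0 ^ 2)
    (hρs : ContDiffOn ℝ (⊤ : ℕ∞) ρ (Set.Ici 1)) (hUs : ContDiffOn ℝ (⊤ : ℕ∞) U (Set.Ici 1))
    (hρpos : ∀ r ≥ (1 : ℝ), 0 < ρ r) (hUpos : ∀ r ≥ (1 : ℝ), 0 < U r)
    (hmass : ∀ r ≥ (1 : ℝ), r ^ 2 * ρ r * U r = ρ0 * q0)
    (hbern : ∀ r ≥ (1 : ℝ), U r ^ 2 / 2 + (γ / (γ - 1)) * ρ r ^ (γ - 1) = 1)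
    (hρ1 : ρ 1 = ρ0) (hU1 : U 1 = q0)
    (hsup : ∀ r ≥ (1 : ℝ), γ * ρ r ^ (γ - 1) < U r ^ 2)
    (hclow : ∀ r ≥ (1 : ℝ), c1 * r ^ (2 * (1 - γ)) ≤ γ * ρ r ^ (γ - 1))
    (hUlow : ∀ r ≥ (1 : ℝ), q0 ≤ U r)
    (hUup : ∀ r ≥ (1 : ℝ), U r ≤ Real.sqrt 2) :

    ∃ C : ℝ, 0 < C ∧ ∀ r ≥ (1 : ℝ),
      -((4 * γ - 6) * P1fun γ ρ U r + r * derivWithin (P1fun γ ρ U) (Set.Ici 1) r) *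
          (1 + r ^ (-δ)) -
          r * deriv (fun s : ℝ => 1 + s ^ (-δ)) r * P1fun γ ρ U r ≥
        2 * (γ * ρ r ^ (γ - 1)) * (2 - γ) * U r ^ 4 /
          (U r ^ 2 - γ * ρ r ^ (γ - 1)) ^ 3 ∧
      2 * (γ * ρ r ^ (γ - 1)) * (2 - γ) * U r ^ 4 /
          (U r ^ 2 - γ * ρ r ^ (γ - 1)) ^ 3 ≥
        C * r ^ (-(2 * (γ - 1))) := by
  have h2γ : (0:ℝ) < 2 - γ := by linarith
  have hγ0 : (0:ℝ) < γ := by linarith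
  have hγ1' : γ - 1 ≠ 0 := by intro h; linarith [sub_eq_zero.mp h]
  refine ⟨c1 * (2 - γ) * q0 ^ 4 / 4,
    div_pos (mul_pos (mul_pos hc1 h2γ) (pow_pos hq0 4)) (by norm_num), ?_⟩
  intro r hr
  have hr0 : (0:ℝ) < r := lt_of_lt_of_le one_pos hr
  have hρr : 0 < ρ r := hρpos r hr
  have hUr : 0 < U r := hUpos r hr
  set B : ℝ := γ * ρ r ^ (γ - 1) with hBdef
  set A : ℝ := U r ^ 2 with hAdef
  have hB : 0 < B := mul_pos hγ0 (Real.rpow_pos_of_pos hρr _)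
  have hd : 0 < A - B := sub_pos.2 (hsup r hr)
  have hA : 0 < A := pow_pos hUr 2
  have hmem : r ∈ Set.Ici (1:ℝ) := hr
  have hUD : UniqueDiffWithinAt ℝ (Set.Ici (1:ℝ)) r := (uniqueDiffOn_Ici 1) r hmem
  -- derivatives of ρ and U within Ici 1
  have hρd : DifferentiableWithinAt ℝ ρ (Set.Ici 1) r :=
    (hρs.differentiableOn (by simp)) r hmem
  have hUd : DifferentiableWithinAt ℝ U (Set.Ici 1) r :=
    (hUs.differentiableOn (by simp)) r hmem
  set dρ : ℝ := derivWithin ρ (Set.Ici 1) r with hdρdef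
  set dU : ℝ := derivWithin U (Set.Ici 1) r with hdUdef
  have Hρ : HasDerivWithinAt ρ dρ (Set.Ici 1) r := hρd.hasDerivWithinAt
  have HU : HasDerivWithinAt U dU (Set.Ici 1) r := hUd.hasDerivWithinAt
  -- derivative of ρ^(γ-1)
  have Hpow : HasDerivWithinAt (fun s => ρ s ^ (γ - 1))
      ((γ - 1) * ρ r ^ (γ - 2) * dρ) (Set.Ici 1) r := by
    have h := (Real.hasDerivAt_rpow_const (x := ρ r) (p := γ - 1)
      (Or.inl hρr.ne')).comp_hasDerivWithinAt r Hρ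
    have e : γ - 1 - 1 = γ - 2 := by ring
    rw [e] at h
    exact h
  -- key rpow identity
  have key : ρ r ^ (γ - 2) * ρ r = ρ r ^ (γ - 1) := by
    rw [← Real.rpow_add_one hρr.ne' (γ - 2), show γ - 2 + 1 = γ - 1 by ring]
  -- differentiate the mass equation
  have eq1 : 2 * r * ρ r * U r + r ^ 2 * dρ * U r + r ^ 2 * ρ r * dU = 0 := by
    have Hf : HasDerivWithinAt (fun s : ℝ => s ^ 2 * ρ s * U s)
        (2 * r * ρ r * U r + r ^ 2 * dρ * U r + r ^ 2 * ρ r * dU) (Set.Ici 1) r := by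
      have h1 : HasDerivWithinAt (fun s : ℝ => s ^ 2) (2 * r) (Set.Ici 1) r := by
        simpa using (hasDerivAt_pow 2 r).hasDerivWithinAt
      have := (h1.mul Hρ).mul HU
      exact this.congr_deriv (by simp only [Pi.mul_apply]; ring)
    have hEq : Set.EqOn (fun s : ℝ => s ^ 2 * ρ s * U s) (fun _ => ρ0 * q0) (Set.Ici 1) :=
      fun x hx => hmass x hx
    have h0 : derivWithin (fun s : ℝ => s ^ 2 * ρ s * U s) (Set.Ici 1) r = 0 := by
      rw [derivWithin_congr hEq (hmass r hr)]
      exact (hasDerivWithinAt_const _ _ _).derivWithin hUD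
    rw [← Hf.derivWithin hUD, h0]
  -- differentiate the Bernoulli equation
  have eq2 : U r * dU + γ * ρ r ^ (γ - 2) * dρ = 0 := by
    have Hf : HasDerivWithinAt (fun s : ℝ => U s ^ 2 / 2 + (γ / (γ - 1)) * ρ s ^ (γ - 1))
        (U r * dU + γ * ρ r ^ (γ - 2) * dρ) (Set.Ici 1) r := by
      have h1 : HasDerivWithinAt (fun s : ℝ => U s ^ 2) (2 * U r * dU) (Set.Ici 1) r := by
        have := HU.pow 2
        exact this.congr_deriv (by norm_num)
      have h2 := (h1.div_const 2).add (Hpow.const_mul (γ / (γ - 1)))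
      exact h2.congr_deriv (by field_simp)
    have hEq : Set.EqOn (fun s : ℝ => U s ^ 2 / 2 + (γ / (γ - 1)) * ρ s ^ (γ - 1))
        (fun _ => (1:ℝ)) (Set.Ici 1) := fun x hx => hbern x hx
    have h0 : derivWithin (fun s : ℝ => U s ^ 2 / 2 + (γ / (γ - 1)) * ρ s ^ (γ - 1))
        (Set.Ici 1) r = 0 := by
      rw [derivWithin_congr hEq (hbern r hr)]
      exact (hasDerivWithinAt_const _ _ _).derivWithin hUD
    rw [← Hf.derivWithin hUD, h0]
  -- a cleaned version of eq2
  have eq2' : U r * dU * ρ r + B * dρ = 0 := by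
    have := congrArg (· * ρ r) eq2
    simp only [add_mul, zero_mul] at this
    calc U r * dU * ρ r + B * dρ
        = (U r * dU) * ρ r + γ * (ρ r ^ (γ - 2) * ρ r) * dρ := by rw [key]
      _ = 0 := by linear_combination this
  -- solve the linear system
  have hBρ : γ * ρ r ^ (γ - 2) * ρ r = B := by
    rw [hBdef, mul_assoc, key]
  have hdρeq : dρ * (r * (A - B)) = -2 * ρ r * A := by
    have h7 : r * (dρ * (r * (A - B))) = r * (-2 * ρ r * A) := by
      linear_combination U r * eq1 - r ^ 2 * eq2' + (r ^ 2 * dρ + 2 * r * ρ r) * hAdef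
    exact mul_left_cancel₀ hr0.ne' h7
  have hdρval : dρ = -2 * ρ r * A / (r * (A - B)) := by
    rw [eq_div_iff (mul_pos hr0 hd).ne']
    exact hdρeq
  have hdUeq : dU * (r * (A - B)) = 2 * B * U r := by
    have h6 : (U r * ρ r) * (dU * (r * (A - B))) = (U r * ρ r) * (2 * B * U r) := by
      linear_combination (r * (A - B)) * eq2' - B * hdρeq + 2 * B * ρ r * hAdef
    exact mul_left_cancel₀ (mul_pos hUr hρr).ne' h6
  have hdUval : dU = 2 * B * U r / (r * (A - B)) := by
    rw [eq_div_iff (mul_pos hr0 hd).ne']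
    exact hdUeq
  -- value of the derivative of the numerator and of 2 U U'
  have hB' : γ * ((γ - 1) * ρ r ^ (γ - 2) * dρ) = -2 * (γ - 1) * A * B / (r * (A - B)) := by
    calc γ * ((γ - 1) * ρ r ^ (γ - 2) * dρ)
        = (γ - 1) * (γ * ρ r ^ (γ - 2) * ρ r) * (-2 * A / (r * (A - B))) := by
          rw [hdρval]; ring
      _ = -2 * (γ - 1) * A * B / (r * (A - B)) := by rw [hBρ]; ring
  have h2U : 2 * U r * dU = 4 * A * B / (r * (A - B)) := by
    calc 2 * U r * dU = 4 * B * (U r ^ 2) / (r * (A - B)) := by rw [hdUval]; ring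
      _ = 4 * A * B / (r * (A - B)) := by rw [← hAdef]; ring
  -- derivative of P1fun
  have hP1' : derivWithin (P1fun γ ρ U) (Set.Ici 1) r
      = (-2 * (γ - 1) * A ^ 2 * B - 4 * A * B ^ 2) / (r * (A - B) ^ 3) := by
    have HN : HasDerivWithinAt (fun x => γ * ρ x ^ (γ - 1))
        (γ * ((γ - 1) * ρ r ^ (γ - 2) * dρ)) (Set.Ici 1) r := Hpow.const_mul γ
    have HU2 : HasDerivWithinAt (fun x => U x ^ 2) (2 * U r * dU) (Set.Ici 1) r := by
      have := HU.pow 2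
      exact this.congr_deriv (by norm_num)
    have HD : HasDerivWithinAt (fun x => U x ^ 2 - γ * ρ x ^ (γ - 1))
        (2 * U r * dU - γ * ((γ - 1) * ρ r ^ (γ - 2) * dρ)) (Set.Ici 1) r := HU2.sub HN
    have HP : HasDerivWithinAt (P1fun γ ρ U)
        ((γ * ((γ - 1) * ρ r ^ (γ - 2) * dρ) * (U r ^ 2 - γ * ρ r ^ (γ - 1))
          - γ * ρ r ^ (γ - 1) * (2 * U r * dU - γ * ((γ - 1) * ρ r ^ (γ - 2) * dρ)))
          / (U r ^ 2 - γ * ρ r ^ (γ - 1)) ^ 2) (Set.Ici 1) r := by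
      exact HN.div HD (by rw [← hBdef, ← hAdef]; exact hd.ne')
    rw [HP.derivWithin hUD, ← hBdef, ← hAdef, hB', h2U]
    field_simp
    ring
  -- derivative of the weight a(r) = 1 + r^(-δ)
  have ha' : deriv (fun s : ℝ => 1 + s ^ (-δ)) r = -δ * r ^ (-δ - 1) := by
    have h1 : HasDerivAt (fun s : ℝ => s ^ (-δ)) (-δ * r ^ (-δ - 1)) r :=
      Real.hasDerivAt_rpow_const (Or.inl hr0.ne')
    have h2 : HasDerivAt (fun s : ℝ => 1 + s ^ (-δ)) (-δ * r ^ (-δ - 1)) r := by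
      exact ((hasDerivAt_const r (1:ℝ)).add h1).congr_deriv (by ring)
    exact h2.deriv
  -- abbreviations
  have hP1v : P1fun γ ρ U r = B / (A - B) := rfl
  have hrδ : (0:ℝ) < r ^ (-δ) := Real.rpow_pos_of_pos hr0 _
  have hrδ1 : r * r ^ (-δ - 1) = r ^ (-δ) := by
    rw [mul_comm, ← Real.rpow_add_one hr0.ne' (-δ - 1)]
    norm_num
  -- the main pointwise quantity T
  have hT : -((4 * γ - 6) * P1fun γ ρ U r + r * derivWithin (P1fun γ ρ U) (Set.Ici 1) r)
      = (-(4 * γ - 6) * B * (A - B) ^ 2 + 2 * (γ - 1) * A ^ 2 * B + 4 * A * B ^ 2)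
        / (A - B) ^ 3 := by
    rw [hP1', hP1v]
    field_simp
    ring
  have hU4 : U r ^ 4 = A ^ 2 := by rw [hAdef]; ring
  set R : ℝ := 2 * B * (2 - γ) * A ^ 2 / (A - B) ^ 3 with hRdef
  have hRgoal : 2 * (γ * ρ r ^ (γ - 1)) * (2 - γ) * U r ^ 4 /
      (U r ^ 2 - γ * ρ r ^ (γ - 1)) ^ 3 = R := by
    rw [hRdef, ← hBdef, ← hAdef, hU4]
  have hR0 : 0 ≤ R := by positivity
  have hTR : -((4 * γ - 6) * P1fun γ ρ U r + r * derivWithin (P1fun γ ρ U) (Set.Ici 1) r)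
      ≥ R := by
    rw [hT, hRdef, ge_iff_le]
    have h1 : (0:ℝ) ≤ (γ - 1) * (B ^ 2 * (A - B)) :=
      mul_nonneg (by linarith) (mul_pos (pow_pos hB 2) hd).le
    have h2 : (0:ℝ) ≤ (4 * γ - 2) * B ^ 3 :=
      mul_nonneg (by linarith) (pow_pos hB 3).le
    rw [div_le_div_iff_of_pos_right (pow_pos hd 3)]
    have hkey : (-(4 * γ - 6) * B * (A - B) ^ 2 + 2 * (γ - 1) * A ^ 2 * B + 4 * A * B ^ 2)
        - 2 * B * (2 - γ) * A ^ 2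
        = 8 * ((γ - 1) * (B ^ 2 * (A - B))) + (4 * γ - 2) * B ^ 3 := by ring
    linarith [h1, h2, hkey]
  constructor
  · -- first inequality
    rw [ha', hRgoal]
    have ha1 : (1:ℝ) ≤ 1 + r ^ (-δ) := by linarith
    have hextra : 0 ≤ -(r * (-δ * r ^ (-δ - 1))) * P1fun γ ρ U r := by
      rw [hP1v]
      have : -(r * (-δ * r ^ (-δ - 1))) = δ * r ^ (-δ) := by
        rw [← hrδ1]; ring
      rw [this]
      positivity
    set X : ℝ := -((4 * γ - 6) * P1fun γ ρ U r
      + r * derivWithin (P1fun γ ρ U) (Set.Ici 1) r) with hXdef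
    have hX0 : 0 ≤ X := le_trans hR0 hTR
    calc X * (1 + r ^ (-δ)) - r * (-δ * r ^ (-δ - 1)) * P1fun γ ρ U r
        ≥ X * 1 + 0 := by
          have h1 : X * 1 ≤ X * (1 + r ^ (-δ)) := by
            apply mul_le_mul_of_nonneg_left ha1 hX0
          linarith [hextra]
      _ = X := by ring
      _ ≥ R := hTR
  · -- second inequality
    rw [hRgoal, hRdef]
    have hexp : (2:ℝ) * (1 - γ) = -(2 * (γ - 1)) := by ring
    have hclow' : c1 * r ^ (-(2 * (γ - 1))) ≤ B := by
      have := hclow r hr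
      rwa [hexp] at this
    have hrp : (0:ℝ) < r ^ (-(2 * (γ - 1))) := Real.rpow_pos_of_pos hr0 _
    have hU2le : A ≤ 2 := by
      rw [hAdef]
      calc U r ^ 2 ≤ Real.sqrt 2 ^ 2 := pow_le_pow_left₀ hUr.le (hUup r hr) 2
        _ = 2 := Real.sq_sqrt (by norm_num)
    have hd3 : (A - B) ^ 3 ≤ 8 := by
      calc (A - B) ^ 3 ≤ 2 ^ 3 := pow_le_pow_left₀ hd.le (by linarith) 3
        _ = 8 := by norm_num
    have hq4 : q0 ^ 4 ≤ U r ^ 4 := pow_le_pow_left₀ hq0.le (hUlow r hr) 4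
    rw [hU4] at hq4
    rw [ge_iff_le, le_div_iff₀ (by positivity)]
    calc c1 * (2 - γ) * q0 ^ 4 / 4 * r ^ (-(2 * (γ - 1))) * (A - B) ^ 3
        ≤ c1 * (2 - γ) * q0 ^ 4 / 4 * r ^ (-(2 * (γ - 1))) * 8 := by
          apply mul_le_mul_of_nonneg_left hd3 (by positivity)
      _ = 2 * (2 - γ) * q0 ^ 4 * (c1 * r ^ (-(2 * (γ - 1)))) := by ring
      _ ≤ 2 * (2 - γ) * q0 ^ 4 * B := by
          apply mul_le_mul_of_nonneg_left hclow' (by positivity)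
      _ ≤ 2 * (2 - γ) * A ^ 2 * B := by
          apply mul_le_mul_of_nonneg_right _ hB.le
          apply mul_le_mul_of_nonneg_left hq4 (by positivity)
      _ = 2 * B * (2 - γ) * A ^ 2 := by ring
end
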